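/- arXiv:1205.7037 — 10 statements merged into one kernel-verified Lean document; each statement's English description precedes it below -/
import Mathlib

section
/- Let K be a field, let b_n, u_n (n ≥ 0) be sequences in K, and let P_n ∈ K[x] be the monic polynomials defined by P_0 = 1, P_1 = x − b_0, and P_{n+1} = (x − b_n)P_n − u_n P_{n−1} for n ≥ 1. Let c ∈ K and let Φ_n (n ≥ 0) be a sequence of nonzero elements of K satisfying Φ_{n+1} + b_n Φ_n + u_n Φ_{n−1} = c Φ_n for all n ≥ 1. Set B_n = Φ_n/Φ_{n−1}, and define the Geronimus-transformed polynomials P̃_0 = 1 and P̃_n = P_n − B_n P_{n−1} for n ≥ 1. Then the P̃_n satisfy the three-term recurrence x P̃_n = P̃_{n+1} + b̃_n P̃_n + ũ_n P̃_{n−1} for all n ≥ 1, where b̃_n = b_n + B_{n+1} − B_n for n ≥ 1, ũ_1 = B_1(c − b_0 − B_1), and ũ_n = u_{n−1} B_n / B_{n−1} for n ≥ 2; moreover x P̃_0 = P̃_1 + (b_0 + B_1) P̃_0. -/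
open Polynomial

/-!
Writing the recurrence as `x P_n = P_{n+1} + b_n P_n + u_n P_{n-1}`, the relation satisfied by
`Φ` at `x = c` says exactly that `u_n = B_n (c - b_n - B_{n+1})`. Substituting this into
`x (P_n - B_n P_{n-1})` and regrouping gives the recurrence for `P̃_n` with
`ũ_n = B_n (c - b_{n-1} - B_n)`, which is the stated `ũ_n` for every `n ≥ 1`. The case `n = 1`
is the general step with `P_{-1} = 0`.
-/

theorem eq_div_mul_sub_div_of_add_add_eq {K : Type*} [Field K] {φ₀ φ₁ φ₂ b u c : K}
    (h₀ : φ₀ ≠ 0) (h₁ : φ₁ ≠ 0) (h : φ₂ + b * φ₁ + u * φ₀ = c * φ₁) :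
    u = φ₁ / φ₀ * (c - b - φ₂ / φ₁) := by
  field_simp
  linear_combination h

theorem geronimus_step {R : Type*} [CommRing R] {p₀ p₁ p₂ p₃ : R[X]}
    {a₁ a₂ v₁ v₂ B₁ B₂ B₃ c : R}
    (h₁ : X * p₁ = p₂ + C a₁ * p₁ + C v₁ * p₀) (h₂ : X * p₂ = p₃ + C a₂ * p₂ + C v₂ * p₁)
    (hv₁ : v₁ = B₁ * (c - a₁ - B₂)) (hv₂ : v₂ = B₂ * (c - a₂ - B₃)) :
    X * (p₂ - C B₂ * p₁) = (p₃ - C B₃ * p₂) + C (a₂ + B₃ - B₂) * (p₂ - C B₂ * p₁)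
      + C (B₂ * (c - a₁ - B₂)) * (p₁ - C B₁ * p₀) := by
  subst hv₁ hv₂
  simp only [map_mul, map_sub, map_add] at h₁ h₂ ⊢
  linear_combination h₂ - C B₂ * h₁

/-- Effect of a Geronimus transformation on the three-term recurrence of monic
orthogonal polynomials: if `P_0 = 1`, `P_1 = x − b_0`,
`P_{n+1} = (x − b_n)P_n − u_n P_{n−1}` (n ≥ 1), `Φ_n ≠ 0` satisfies
`Φ_{n+1} + b_n Φ_n + u_n Φ_{n−1} = c Φ_n` (n ≥ 1), `B_n = Φ_n/Φ_{n−1}`,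
`P̃_0 = 1`, `P̃_n = P_n − B_n P_{n−1}` (n ≥ 1), then
`x P̃_n = P̃_{n+1} + b̃_n P̃_n + ũ_n P̃_{n−1}` for `n ≥ 1` with
`b̃_n = b_n + B_{n+1} − B_n`, `ũ_1 = B_1(c − b_0 − B_1)`,
`ũ_n = u_{n−1} B_n / B_{n−1}` (n ≥ 2); moreover `x P̃_0 = P̃_1 + (b_0 + B_1) P̃_0`. -/
theorem geronimus_three_term_recurrence {K : Type*} [Field K]
    (b u : ℕ → K) (P : ℕ → Polynomial K)
    (hP0 : P 0 = 1) (hP1 : P 1 = X - C (b 0))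
    (hPrec : ∀ n : ℕ, 1 ≤ n → P (n + 1) = (X - C (b n)) * P n - C (u n) * P (n - 1))
    (c : K) (Φ : ℕ → K) (hΦne : ∀ n, Φ n ≠ 0)
    (hΦ : ∀ n : ℕ, 1 ≤ n → Φ (n + 1) + b n * Φ n + u n * Φ (n - 1) = c * Φ n)
    (B : ℕ → K) (hB : ∀ n : ℕ, 1 ≤ n → B n = Φ n / Φ (n - 1))
    (tP : ℕ → Polynomial K) (htP0 : tP 0 = 1)
    (htP : ∀ n : ℕ, 1 ≤ n → tP n = P n - C (B n) * P (n - 1))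
    (bt ut : ℕ → K)
    (hbt : ∀ n : ℕ, 1 ≤ n → bt n = b n + B (n + 1) - B n)
    (hut1 : ut 1 = B 1 * (c - b 0 - B 1))
    (hut : ∀ n : ℕ, 2 ≤ n → ut n = u (n - 1) * B n / B (n - 1)) :
    (∀ n : ℕ, 1 ≤ n →
        X * tP n = tP (n + 1) + C (bt n) * tP n + C (ut n) * tP (n - 1)) ∧
      X * tP 0 = tP 1 + C (b 0 + B 1) * tP 0 := by
  have hu : ∀ n, 1 ≤ n → u n = B n * (c - b n - B (n + 1)) := fun n hn => by
    rw [hB n hn, hB (n + 1) (by omega), Nat.add_sub_cancel]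
    exact eq_div_mul_sub_div_of_add_add_eq (hΦne _) (hΦne _) (hΦ n hn)
  have hXP : ∀ n, 1 ≤ n → X * P n = P (n + 1) + C (b n) * P n + C (u n) * P (n - 1) :=
    fun n hn => by rw [hPrec n hn]; ring
  have hXP0 : X * P 0 = P 1 + C (b 0) * P 0 + C 0 * 0 := by simp [hP0, hP1]
  refine ⟨fun n hn => ?_, ?_⟩
  · obtain rfl | ⟨m, rfl⟩ : n = 1 ∨ ∃ m, n = m + 2 := by
      rcases n with _ | _ | m <;> simp_all
    · simpa [htP, hbt, hut1, htP0, hP0] using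
        geronimus_step hXP0 (hXP 1 le_rfl) (by simp) (hu 1 le_rfl) (B₁ := 0)
    · have hB_ne : B (m + 1) ≠ 0 := by
        rw [hB _ (by omega)]; exact div_ne_zero (hΦne _) (hΦne _)
      have hutm : ut (m + 2) = B (m + 2) * (c - b (m + 1) - B (m + 2)) := by
        rw [hut _ (by omega), show m + 2 - 1 = m + 1 from rfl, hu _ (by omega)]
        field_simp
      simpa [htP, hbt, hutm] using
        geronimus_step (hXP (m + 1) (by omega)) (hXP (m + 2) (by omega))
          (hu _ (by omega)) (hu _ (by omega))
  · rw [htP 1 le_rfl, htP0, hP1, Nat.sub_self, hP0]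
    simp only [map_add]
    ring
end

section
/- Let K be a field, q ∈ K with q ≠ 0 and q ≠ 1, N ≥ 1 an integer, and α_{ks} ∈ K for 0 ≤ s ≤ k ≤ 2N. Define a_k(x) = ∑_{s=0}^{k} α_{ks} x^s, the q-derivative (D_q f)(x) = (f(qx) − f(x))/((q−1)x), and the operator (L_q f)(x) = ∑_{k=0}^{2N} a_k(q^{−N}x) · (D_q^k f)(q^{−N}x). Set [m] = (q^m − 1)/(q − 1). Then for every integer n ≥ 0 and every x ≠ 0, L_q applied to the monomial x^n gives L_q x^n = ∑_{s=0}^{2N} A_n^{(s)} x^{n−s}, where A_n^{(s)} = q^{N(s−n)} (∏_{i=0}^{s−1} [n−i]) · π_s(q^n) and π_s(q^n) = α_{s0} + ∑_{i=1}^{2N−s} α_{s+i,i} ∏_{l=0}^{i−1} [n−s−l] (terms x^{n−s} with s > n have vanishing coefficient since [0] = 0). -/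
/-- The q-derivative `(D_q f)(x) = (f(qx) − f(x))/((q−1)x)`. -/
noncomputable def qDeriv {K : Type*} [Field K] (q : K) (f : K → K) : K → K :=
  fun x => (f (q * x) - f x) / ((q - 1) * x)

/-- The q-number `[m] = (q^m − 1)/(q − 1)`. -/
noncomputable def qNum {K : Type*} [Field K] (q : K) (m : ℕ) : K :=
  (q ^ m - 1) / (q - 1)

/-- Iterated q-derivative of a monomial. -/
lemma iter_qDeriv {K : Type*} [Field K] (q : K) (hq0 : q ≠ 0) (hq1 : q ≠ 1)
    (n : ℕ) (k : ℕ) :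
    ∀ y : K, y ≠ 0 → ((qDeriv q)^[k] (fun t => t ^ n)) y
      = (∏ i ∈ Finset.range k, qNum q (n - i)) * y ^ ((n : ℤ) - (k : ℤ)) := by
  have hq1' : q - 1 ≠ 0 := sub_ne_zero.mpr hq1
  induction k with
  | zero =>
    intro y hy
    simp [zpow_natCast]
  | succ k ih =>
    intro y hy
    have hqy : q * y ≠ 0 := mul_ne_zero hq0 hy
    rw [Function.iterate_succ_apply']
    show (((qDeriv q)^[k] (fun t => t ^ n)) (q * y) - ((qDeriv q)^[k] (fun t => t ^ n)) y)
        / ((q - 1) * y) = _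
    rw [ih (q * y) hqy, ih y hy, Finset.prod_range_succ]
    rcases le_or_gt k n with hk | hk
    · have h2 : (n : ℤ) - ((k + 1 : ℕ) : ℤ) = ((n : ℤ) - (k : ℤ)) - 1 := by push_cast; ring
      have h3 : q ^ ((n : ℤ) - (k : ℤ)) = q ^ (n - k : ℕ) := by
        rw [← zpow_natCast q (n - k)]
        congr 1
        omega
      rw [h2, mul_zpow, h3, zpow_sub_one₀ hy]
      unfold qNum
      field_simp
    · have hc : (∏ i ∈ Finset.range k, qNum q (n - i)) = 0 :=
        Finset.prod_eq_zero (Finset.mem_range.2 hk) (by simp [qNum])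
      rw [hc]
      simp
/-- Triangle reindexing of a double sum. -/
lemma sum_triangle_reindex {K : Type*} [AddCommMonoid K] (M : ℕ) (f : ℕ → ℕ → K) :
    (∑ k ∈ Finset.range (M + 1), ∑ s ∈ Finset.range (k + 1), f k s)
      = ∑ d ∈ Finset.range (M + 1), ∑ i ∈ Finset.range (M + 1 - d), f (d + i) i := by
  rw [Finset.sum_sigma', Finset.sum_sigma']
  refine Finset.sum_nbij' (fun p => ⟨p.1 - p.2, p.2⟩) (fun p => ⟨p.1 + p.2, p.2⟩)
    ?_ ?_ ?_ ?_ ?_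
  · rintro ⟨a, b⟩ h
    simp only [Finset.mem_sigma, Finset.mem_range] at h ⊢
    omega
  · rintro ⟨a, b⟩ h
    simp only [Finset.mem_sigma, Finset.mem_range] at h ⊢
    omega
  · rintro ⟨a, b⟩ h
    simp only [Finset.mem_sigma, Finset.mem_range] at h
    have hab : a - b + b = a := by omega
    simp [hab]
  · rintro ⟨a, b⟩ h
    simp [Nat.add_sub_cancel]
  · rintro ⟨a, b⟩ h
    simp only [Finset.mem_sigma, Finset.mem_range] at h
    have hab : a - b + b = a := by omega
    simp only [hab]

/-- Action of the general q-difference operator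
`L_q = ∑_{k=0}^{2N} a_k(q^{−N}x) T^{−N} D_q^k`, with `a_k(x) = ∑_{s=0}^k α_{ks} x^s`,
on the monomial `x^n`:
`L_q x^n = ∑_{s=0}^{2N} A_n^{(s)} x^{n−s}` where
`A_n^{(s)} = q^{N(s−n)} [n][n−1]⋯[n−s+1] π_s(q^n)` and
`π_s(q^n) = α_{s0} + ∑_{i=1}^{2N−s} α_{s+i,i} [n−s][n−s−1]⋯[n−s−i+1]`.
(Terms `x^{n−s}` with `s > n` have vanishing coefficient since `[0] = 0`.) -/
theorem qDifferenceOperator_on_monomials {K : Type*} [Field K]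
    (q : K) (hq0 : q ≠ 0) (hq1 : q ≠ 1) (N : ℕ) (hN : 1 ≤ N)
    (α : ℕ → ℕ → K) (n : ℕ) (x : K) (hx : x ≠ 0) :
    (∑ k ∈ Finset.range (2 * N + 1),
        (∑ s ∈ Finset.range (k + 1), α k s * (q ^ (-(N : ℤ)) * x) ^ s) *
          ((qDeriv q)^[k] (fun t => t ^ n)) (q ^ (-(N : ℤ)) * x)) =
      ∑ s ∈ Finset.range (2 * N + 1),
        (q ^ ((N : ℤ) * ((s : ℤ) - (n : ℤ))) *
            (∏ i ∈ Finset.range s, qNum q (n - i)) *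
            (α s 0 + ∑ i ∈ Finset.Icc 1 (2 * N - s),
              α (s + i) i * ∏ l ∈ Finset.range i, qNum q (n - s - l))) *
          x ^ ((n : ℤ) - (s : ℤ)) := by
  set z : K := q ^ (-(N : ℤ)) * x with hzdef
  have hz : z ≠ 0 := mul_ne_zero (zpow_ne_zero _ hq0) hx
  set F : ℕ → ℕ → K := fun k s =>
    α k s * z ^ s * ((∏ i ∈ Finset.range k, qNum q (n - i)) * z ^ ((n : ℤ) - (k : ℤ)))
    with hF
  have hLHS : (∑ k ∈ Finset.range (2 * N + 1),
      (∑ s ∈ Finset.range (k + 1), α k s * z ^ s) *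
        ((qDeriv q)^[k] (fun t => t ^ n)) z)
      = ∑ k ∈ Finset.range (2 * N + 1), ∑ s ∈ Finset.range (k + 1), F k s := by
    refine Finset.sum_congr rfl fun k _ => ?_
    rw [iter_qDeriv q hq0 hq1 n k z hz, Finset.sum_mul]
  rw [hLHS, sum_triangle_reindex]
  refine Finset.sum_congr rfl fun d hd => ?_
  have hd' : d ≤ 2 * N := by simpa [Nat.lt_succ_iff] using hd
  -- key termwise identity
  have key : ∀ i : ℕ, F (d + i) i =
      q ^ ((N : ℤ) * ((d : ℤ) - (n : ℤ))) * (∏ j ∈ Finset.range d, qNum q (n - j)) *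
        (α (d + i) i * ∏ l ∈ Finset.range i, qNum q (n - d - l)) *
        x ^ ((n : ℤ) - (d : ℤ)) := by
    intro i
    have h1 : (∏ j ∈ Finset.range (d + i), qNum q (n - j))
        = (∏ j ∈ Finset.range d, qNum q (n - j)) *
          ∏ l ∈ Finset.range i, qNum q (n - d - l) := by
      rw [Finset.prod_range_add]
      congr 1
      exact Finset.prod_congr rfl fun l _ => by rw [Nat.sub_sub]
    have h2 : z ^ i * z ^ ((n : ℤ) - ((d + i : ℕ) : ℤ))
        = q ^ ((N : ℤ) * ((d : ℤ) - (n : ℤ))) * x ^ ((n : ℤ) - (d : ℤ)) := by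
      rw [← zpow_natCast z i, ← zpow_add₀ hz]
      have he : (i : ℤ) + ((n : ℤ) - ((d + i : ℕ) : ℤ)) = (n : ℤ) - (d : ℤ) := by
        push_cast; ring
      rw [he, hzdef, mul_zpow, ← zpow_mul]
      congr 2
      ring
    rw [hF]
    simp only
    rw [h1]
    calc α (d + i) i * z ^ i *
          ((∏ j ∈ Finset.range d, qNum q (n - j)) *
            (∏ l ∈ Finset.range i, qNum q (n - d - l)) * z ^ ((n : ℤ) - ((d + i : ℕ) : ℤ)))
        = (∏ j ∈ Finset.range d, qNum q (n - j)) *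
            (α (d + i) i * ∏ l ∈ Finset.range i, qNum q (n - d - l)) *
            (z ^ i * z ^ ((n : ℤ) - ((d + i : ℕ) : ℤ))) := by ring
      _ = _ := by rw [h2]; ring
  -- rewrite the RHS inner structure
  have hrange : 2 * N + 1 - d = (2 * N - d) + 1 := by omega
  have hIcc : (∑ i ∈ Finset.Icc 1 (2 * N - d),
        α (d + i) i * ∏ l ∈ Finset.range i, qNum q (n - d - l))
      = ∑ i ∈ Finset.range (2 * N - d),
        α (d + (i + 1)) (i + 1) * ∏ l ∈ Finset.range (i + 1), qNum q (n - d - l) := by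
    rw [← Finset.Ico_add_one_right_eq_Icc, Finset.sum_Ico_eq_sum_range]
    exact Finset.sum_congr rfl fun i _ => by rw [add_comm 1 i]
  have hA : F (d + 0) 0 = q ^ ((N : ℤ) * ((d : ℤ) - (n : ℤ))) *
      (∏ j ∈ Finset.range d, qNum q (n - j)) * α d 0 * x ^ ((n : ℤ) - (d : ℤ)) := by
    rw [key 0]
    simp
  have hB : (∑ i ∈ Finset.range (2 * N - d), F (d + (i + 1)) (i + 1))
      = (q ^ ((N : ℤ) * ((d : ℤ) - (n : ℤ))) * (∏ j ∈ Finset.range d, qNum q (n - j)) *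
          (∑ i ∈ Finset.Icc 1 (2 * N - d),
            α (d + i) i * ∏ l ∈ Finset.range i, qNum q (n - d - l))) *
        x ^ ((n : ℤ) - (d : ℤ)) := by
    rw [hIcc, Finset.mul_sum, Finset.sum_mul]
    refine Finset.sum_congr rfl fun i _ => ?_
    rw [key (i + 1)]
  rw [hrange, Finset.sum_range_succ', hA, hB]
  ring
end

section
/- Fix real numbers β and M and an integer n ≥ 0. For ε ∈ ℝ, ε ≠ 0, set q = −e^{ε}, b = −e^{βε}, and define A_n^{(0)}(ε) = M(q−1) q^{−3n−1} (q^n;q)_3 (bq^n;q)_3 / (1 − q^{−3}) − (q^{−n}−1)(1−bq^{n+2})(bq;q)_3 (q;q)_1. Then as ε → 0 (ε ≠ 0), A_n^{(0)}(ε)/ε^3 tends to −8M n(n+2)(n+1+β) + 8n(β+1)(β+3) if n is even, and to 8M(n+1)(n+β)(n+2+β) − 8(n+2+β)(β+1)(β+3) if n is odd. -/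
/-!
With `q = -e^ε` and `b = -e^{βε}`, every factor `1 - b^i q^k` of `A_n^{(0)}` is `1 - e^{cε}`
or `1 + e^{cε}` according to the parity of `i + k`: the first kind is `-cε + o(ε)`, the second
tends to `2`. For either parity of `n`, each of the two terms of `A_n^{(0)}` has exactly three
factors of the first kind, so `A_n^{(0)} / ε³` tends to the value at `ε = 0` of the remaining
factors times the three slopes `-c`.
-/

/-- The q-shifted factorial `(a;q)_n = ∏_{k=0}^{n-1} (1 - a q^k)`. -/
noncomputable def qPoch (q a : ℝ) (n : ℕ) : ℝ :=
  ∏ k ∈ Finset.range n, (1 - a * q ^ k)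

open Filter Real Topology

lemma qPoch_three (q a : ℝ) : qPoch q a 3 = (1 - a) * (1 - a * q) * (1 - a * q ^ 2) := by
  simp [qPoch, Finset.prod_range_succ]

lemma qPoch_one (q a : ℝ) : qPoch q a 1 = 1 - a := by
  simp [qPoch]

lemma tendsto_one_sub_exp_mul_div (a : ℝ) :
    Tendsto (fun ε => (1 - exp (a * ε)) / ε) (𝓝[≠] 0) (𝓝 (-a)) := by
  have h : HasDerivAt (fun ε => 1 - exp (a * ε)) (-a) 0 := by
    simpa using ((hasDerivAt_id 0).const_mul a).exp.const_sub 1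
  simpa [slope_fun_def, div_eq_inv_mul] using hasDerivAt_iff_tendsto_slope.mp h

lemma tendsto_mul_one_sub_exp_mul_div_pow_three {g : ℝ → ℝ} (hg : ContinuousAt g 0)
    (a b c : ℝ) :
    Tendsto (fun ε => g ε * (1 - exp (a * ε)) * (1 - exp (b * ε)) * (1 - exp (c * ε)) / ε ^ 3)
      (𝓝[≠] 0) (𝓝 (-(g 0 * a * b * c))) := by
  have h := (((hg.tendsto.mono_left nhdsWithin_le_nhds).mul (tendsto_one_sub_exp_mul_div a)).mul
    (tendsto_one_sub_exp_mul_div b)).mul (tendsto_one_sub_exp_mul_div c)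
  rw [show g 0 * -a * -b * -c = -(g 0 * a * b * c) by ring] at h
  refine h.congr' (eventually_nhdsWithin_of_forall fun ε (hε : ε ≠ 0) => ?_)
  field_simp

noncomputable def A0 (M q b : ℝ) (n : ℕ) : ℝ :=
  M * (q - 1) * q ^ (-(3 * (n : ℤ)) - 1) * qPoch q (q ^ n) 3 * qPoch q (b * q ^ n) 3 /
      (1 - q ^ (-3 : ℤ)) -
    (q ^ (-(n : ℤ)) - 1) * (1 - b * q ^ (n + 2)) * qPoch q (b * q) 3 * qPoch q q 1

lemma A0_neg_neg_of_even (M : ℝ) {u : ℝ} (hu : u ≠ 0) (v : ℝ) {n : ℕ} (hn : Even n) :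
    A0 M (-u) (-v) n =
      M * (1 + u) * (u ^ (3 * n + 1))⁻¹ * (1 + u ^ (n + 1)) * (1 + v * u ^ n) *
          (1 + v * u ^ (n + 2)) / (1 + (u ^ 3)⁻¹) *
          (1 - u ^ n) * (1 - u ^ (n + 2)) * (1 - v * u ^ (n + 1)) -
        -((1 + v * u ^ (n + 2)) * (1 + v * u ^ 2) * (1 + u)) * (1 - (u ^ n)⁻¹) * (1 - v * u) *
          (1 - v * u ^ 3) := by
  have hexp : -(3 * (n : ℤ)) - 1 = -((3 * n + 1 : ℕ) : ℤ) := by push_cast; ring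
  simp only [A0, qPoch_three, qPoch_one, hexp, zpow_neg, zpow_natCast, zpow_ofNat, neg_sq, mul_neg,
    neg_mul, neg_neg, inv_neg, sub_neg_eq_add, hn.neg_pow, (hn.add even_two).neg_pow,
    (hn.mul_left 3).add_one.neg_pow, Odd.neg_pow (by decide : Odd 3)]
  field_simp
  ring

lemma A0_neg_neg_of_odd (M : ℝ) {u : ℝ} (hu : u ≠ 0) (v : ℝ) {n : ℕ} (hn : Odd n) :
    A0 M (-u) (-v) n =
      -(M * (1 + u) * (u ^ (3 * n + 1))⁻¹ * (1 + u ^ n) * (1 + u ^ (n + 2)) *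
          (1 + v * u ^ (n + 1)) / (1 + (u ^ 3)⁻¹)) *
          (1 - u ^ (n + 1)) * (1 - v * u ^ n) * (1 - v * u ^ (n + 2)) -
        -((1 + (u ^ n)⁻¹) * (1 + v * u ^ 2) * (1 + u)) * (1 - v * u ^ (n + 2)) * (1 - v * u) *
          (1 - v * u ^ 3) := by
  have hexp : -(3 * (n : ℤ)) - 1 = -((3 * n + 1 : ℕ) : ℤ) := by push_cast; ring
  simp only [A0, qPoch_three, qPoch_one, hexp, zpow_neg, zpow_natCast, zpow_ofNat, neg_sq, mul_neg,
    neg_mul, neg_neg, inv_neg, sub_neg_eq_add, hn.neg_pow, (hn.add_even even_two).neg_pow,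
    ((by decide : Odd 3).mul hn).add_one.neg_pow, Odd.neg_pow (by decide : Odd 3)]
  field_simp
  ring

/-- The `q → −1` limit of `A_n^{(0)}/ε³` under the parametrization
`q = −e^ε`, `b = −e^{βε}`, where
`A_n^{(0)} = M(q−1) q^{−3n−1} (q^n;q)_3 (bq^n;q)_3 / (1−q^{−3})
 − (q^{−n}−1)(1−bq^{n+2})(bq;q)_3 (q;q)_1`:
the limit is `−8Mn(n+2)(n+1+β)+8n(β+1)(β+3)` for even `n` and
`8M(n+1)(n+β)(n+2+β)−8(n+2+β)(β+1)(β+3)` for odd `n`. -/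
theorem A0_limit (β M : ℝ) (n : ℕ) :
    Filter.Tendsto
      (fun ε : ℝ =>
        (let q : ℝ := -Real.exp ε
         let b : ℝ := -Real.exp (β * ε)
         M * (q - 1) * q ^ (-(3 * (n : ℤ)) - 1) * qPoch q (q ^ n) 3 * qPoch q (b * q ^ n) 3 /
             (1 - q ^ (-3 : ℤ)) -
           (q ^ (-(n : ℤ)) - 1) * (1 - b * q ^ (n + 2)) * qPoch q (b * q) 3 * qPoch q q 1) /
          ε ^ 3)
      (nhdsWithin 0 ({0}ᶜ : Set ℝ))
      (nhds (if Even n then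
          -8 * M * n * (n + 2) * (n + 1 + β) + 8 * n * (β + 1) * (β + 3)
        else
          8 * M * (n + 1) * (n + β) * (n + 2 + β) - 8 * (n + 2 + β) * (β + 1) * (β + 3))) := by
  show Tendsto (fun ε => A0 M (-exp ε) (-exp (β * ε)) n / ε ^ 3) _ _
  rcases Nat.even_or_odd n with hn | hn
  · simp only [if_pos hn, A0_neg_neg_of_even M (exp_pos _).ne' _ hn, sub_div]
    -- fold `exp (β * ε) * exp ε ^ k` etc. back into `exp (c * ε)`, the shape of the three slopes
    simp only [← exp_nat_mul, ← exp_neg, ← neg_mul, ← exp_add, ← add_mul, ← add_one_mul]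
    convert (tendsto_mul_one_sub_exp_mul_div_pow_three ?_ _ _ _).sub
      (tendsto_mul_one_sub_exp_mul_div_pow_three ?_ _ _ _) using 2
    · simp only [mul_zero, exp_zero]
      push_cast
      ring
    all_goals fun_prop (disch := positivity)
  · simp only [if_neg (Nat.not_even_iff_odd.mpr hn), A0_neg_neg_of_odd M (exp_pos _).ne' _ hn,
      sub_div]
    simp only [← exp_nat_mul, ← exp_neg, ← neg_mul, ← exp_add, ← add_mul, ← add_one_mul]
    convert (tendsto_mul_one_sub_exp_mul_div_pow_three ?_ _ _ _).sub
      (tendsto_mul_one_sub_exp_mul_div_pow_three ?_ _ _ _) using 2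
    · simp only [mul_zero, exp_zero]
      push_cast
      ring
    all_goals fun_prop (disch := positivity)
end

section
/- Fix real numbers β and M and an integer n ≥ 0. For ε ∈ ℝ, ε ≠ 0, set q = −e^{ε}, b = −e^{βε}, and define A_n^{(1)}(ε) = (1 − q^{−n}) ( M q^{2(1−n)} (q^{n+1};q)_2 (bq^n;q)_2 (1 − q^{n−1}) − (q;q)_1 (bq;q)_3 (1 − q^{n+1}) ). Then as ε → 0 (ε ≠ 0), A_n^{(1)}(ε)/ε^3 tends to 8M n(n+2)(n+1+β) − 8n(β+1)(β+3) if n is even, and to 8(β+1)(β+3)(n+1) − 8M(n^2−1)(n+β) if n is odd. -/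
open Real Filter

lemma exp_zpow' (ε : ℝ) (k : ℤ) : (Real.exp ε) ^ k = Real.exp ((k:ℝ) * ε) := by
  rw [← Real.rpow_intCast (Real.exp ε) k, ← Real.exp_mul, mul_comm]

lemma negexp_zpow (ε : ℝ) (k : ℤ) : (-Real.exp ε) ^ k = (-1)^k * Real.exp ((k:ℝ) * ε) := by
  rw [show -Real.exp ε = (-1) * Real.exp ε by ring, mul_zpow, exp_zpow']

lemma negexp_pow (ε : ℝ) (k : ℕ) : (-Real.exp ε) ^ k = (-1)^k * Real.exp ((k:ℝ) * ε) := by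
  rw [show -Real.exp ε = (-1) * Real.exp ε by ring, mul_pow, ← Real.exp_nat_mul]

lemma tendsto_U (c : ℝ) : Tendsto (fun ε => (1 - Real.exp (c*ε))/ε) (nhdsWithin 0 {(0:ℝ)}ᶜ) (nhds (-c)) := by
  have h : HasDerivAt (fun x : ℝ => 1 - Real.exp (c*x)) (-c) 0 := by
    have := (((hasDerivAt_id (0:ℝ)).const_mul c).exp).const_sub 1
    simpa using this
  have := hasDerivAt_iff_tendsto_slope.mp h
  refine this.congr fun x => ?_
  simp [slope_def_field]

lemma tendsto_V (c : ℝ) : Tendsto (fun ε : ℝ => 1 + Real.exp (c*ε)) (nhdsWithin 0 {(0:ℝ)}ᶜ) (nhds 2) := by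
  have : Tendsto (fun ε : ℝ => 1 + Real.exp (c*ε)) (nhds 0) (nhds 2) := by
    have : Continuous (fun ε : ℝ => 1 + Real.exp (c*ε)) := by continuity
    have h := this.tendsto 0
    norm_num at h
    exact h
  exact this.mono_left nhdsWithin_le_nhds

lemma tendsto_E (c : ℝ) : Tendsto (fun ε : ℝ => Real.exp (c*ε)) (nhdsWithin 0 {(0:ℝ)}ᶜ) (nhds 1) := by
  have : Tendsto (fun ε : ℝ => Real.exp (c*ε)) (nhds 0) (nhds 1) := by
    have : Continuous (fun ε : ℝ => Real.exp (c*ε)) := by continuity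
    have h := this.tendsto 0
    simpa using h
  exact this.mono_left nhdsWithin_le_nhds



/-- The `q → −1` limit of `A_n^{(1)}/ε³` under the parametrization
`q = −e^ε`, `b = −e^{βε}`, where
`A_n^{(1)} = (1−q^{−n})(M q^{2(1−n)} (q^{n+1};q)_2 (bq^n;q)_2 (1−q^{n−1})
 − (q;q)_1 (bq;q)_3 (1−q^{n+1}))`:
the limit is `8Mn(n+2)(n+1+β)−8n(β+1)(β+3)` for even `n` and
`8(β+1)(β+3)(n+1)−8M(n²−1)(n+β)` for odd `n`. -/
theorem A1_limit (β M : ℝ) (n : ℕ) :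
    Filter.Tendsto
      (fun ε : ℝ =>
        (let q : ℝ := -Real.exp ε
         let b : ℝ := -Real.exp (β * ε)
         (1 - q ^ (-(n : ℤ))) *
           (M * q ^ (2 * (1 - (n : ℤ))) * qPoch q (q ^ (n + 1)) 2 * qPoch q (b * q ^ n) 2 *
               (1 - q ^ ((n : ℤ) - 1)) -
             qPoch q q 1 * qPoch q (b * q) 3 * (1 - q ^ (n + 1)))) / ε ^ 3)
      (nhdsWithin 0 ({0}ᶜ : Set ℝ))
      (nhds (if Even n then
          8 * M * n * (n + 2) * (n + 1 + β) - 8 * n * (β + 1) * (β + 3)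
        else
          8 * (β + 1) * (β + 3) * (n + 1) - 8 * M * ((n : ℝ) ^ 2 - 1) * (n + β))) := by
  rcases Nat.even_or_odd n with hn | hn
  · rw [if_pos hn]
    have T : Tendsto (fun ε : ℝ =>
        (1 - Real.exp ((-(n:ℝ))*ε))/ε *
          (M * Real.exp ((2*(1-(n:ℝ)))*ε) * ((1 + Real.exp (((n:ℝ)+1)*ε)) * ((1 - Real.exp (((n:ℝ)+2)*ε))/ε)) *
              ((1 + Real.exp ((β+(n:ℝ))*ε)) * ((1 - Real.exp ((β+(n:ℝ)+1)*ε))/ε)) * (1 + Real.exp (((n:ℝ)-1)*ε)) -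
            (1 + Real.exp (1*ε)) * ((1 - Real.exp ((β+1)*ε))/ε * ((1 + Real.exp ((β+2)*ε)) * ((1 - Real.exp ((β+3)*ε))/ε))) * (1 + Real.exp (((n:ℝ)+1)*ε))))
        (nhdsWithin 0 ({0}ᶜ : Set ℝ))
        (nhds ((-(-(n:ℝ))) * (M * 1 * (2 * (-((n:ℝ)+2))) * (2 * (-(β+(n:ℝ)+1))) * 2 -
            2 * ((-(β+1)) * (2 * (-(β+3)))) * 2))) :=
      (tendsto_U _).mul
        (((((tendsto_const_nhds.mul (tendsto_E _)).mul ((tendsto_V _).mul (tendsto_U _))).mul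
            ((tendsto_V _).mul (tendsto_U _))).mul (tendsto_V _)).sub
          (((tendsto_V _).mul ((tendsto_U _).mul ((tendsto_V _).mul (tendsto_U _)))).mul (tendsto_V _)))
    rw [show (8 * M * n * (n + 2) * (n + 1 + β) - 8 * n * (β + 1) * (β + 3) : ℝ) =
        (-(-(n:ℝ))) * (M * 1 * (2 * (-((n:ℝ)+2))) * (2 * (-(β+(n:ℝ)+1))) * 2 -
            2 * ((-(β+1)) * (2 * (-(β+3)))) * 2) by ring]
    refine Filter.Tendsto.congr' ?_ T
    filter_upwards [self_mem_nhdsWithin] with ε hε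
    replace hε : ε ≠ 0 := hε
    have hev : Even (n:ℤ) := (Int.even_coe_nat n).mpr hn
    have s1 : ((-1:ℝ)) ^ (-(n:ℤ)) = 1 := Even.neg_one_zpow hev.neg
    have s2 : ((-1:ℝ)) ^ (2*(1-(n:ℤ))) = 1 := Even.neg_one_zpow ⟨1-(n:ℤ), by ring⟩
    have s3 : ((-1:ℝ)) ^ ((n:ℤ)-1) = -1 := Odd.neg_one_zpow (hev.sub_odd odd_one)
    have s4 : ((-1:ℝ)) ^ (n+1) = -1 := by rw [pow_succ, hn.neg_one_pow]; ring
    have s5 : ((-1:ℝ)) ^ n = 1 := hn.neg_one_pow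
    have hd : ∀ x:ℝ, Real.exp (2*x) = Real.exp x^2 := fun x => by rw [two_mul, Real.exp_add, sq]
    have hd3 : ∀ x:ℝ, Real.exp (3*x) = Real.exp x^3 := fun x => by
      rw [show (3:ℝ)*x = x + (x + x) by ring, Real.exp_add, Real.exp_add]; ring
    have h1 : (-Real.exp ε) ^ (-(n:ℤ)) = (Real.exp ((n:ℝ)*ε))⁻¹ := by
      rw [negexp_zpow, s1, one_mul]; push_cast; rw [neg_mul, Real.exp_neg]
    have h2 : (-Real.exp ε) ^ (2*(1-(n:ℤ))) = Real.exp ε^2 / Real.exp ((n:ℝ)*ε)^2 := by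
      rw [negexp_zpow, s2, one_mul]; push_cast
      rw [show (2*(1-(n:ℝ)))*ε = 2*ε - 2*((n:ℝ)*ε) by ring, Real.exp_sub, hd, hd]
    have h3 : (-Real.exp ε) ^ ((n:ℤ)-1) = -(Real.exp ((n:ℝ)*ε) / Real.exp ε) := by
      rw [negexp_zpow, s3]; push_cast
      rw [show ((n:ℝ)-1)*ε = (n:ℝ)*ε - 1*ε by ring, Real.exp_sub, one_mul]; ring
    have h4 : (-Real.exp ε) ^ (n+1) = -(Real.exp ((n:ℝ)*ε) * Real.exp ε) := by
      rw [negexp_pow, s4]; push_cast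
      rw [show ((n:ℝ)+1)*ε = (n:ℝ)*ε + 1*ε by ring, Real.exp_add, one_mul]; ring
    have h5 : (-Real.exp ε) ^ n = Real.exp ((n:ℝ)*ε) := by rw [negexp_pow, s5, one_mul]
    have e1 : Real.exp ((-(n:ℝ))*ε) = (Real.exp ((n:ℝ)*ε))⁻¹ := by rw [neg_mul, Real.exp_neg]
    have e2 : Real.exp ((2*(1-(n:ℝ)))*ε) = Real.exp ε^2 / Real.exp ((n:ℝ)*ε)^2 := by
      rw [show (2*(1-(n:ℝ)))*ε = 2*ε - 2*((n:ℝ)*ε) by ring, Real.exp_sub, hd, hd]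
    have e3 : Real.exp (((n:ℝ)+1)*ε) = Real.exp ((n:ℝ)*ε) * Real.exp ε := by
      rw [show ((n:ℝ)+1)*ε = (n:ℝ)*ε + 1*ε by ring, Real.exp_add, one_mul]
    have e4 : Real.exp (((n:ℝ)+2)*ε) = Real.exp ((n:ℝ)*ε) * Real.exp ε^2 := by
      rw [show ((n:ℝ)+2)*ε = (n:ℝ)*ε + 2*ε by ring, Real.exp_add, hd]
    have e5 : Real.exp ((β+(n:ℝ))*ε) = Real.exp (β*ε) * Real.exp ((n:ℝ)*ε) := by
      rw [show (β+(n:ℝ))*ε = β*ε + (n:ℝ)*ε by ring, Real.exp_add]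
    have e6 : Real.exp ((β+(n:ℝ)+1)*ε) = Real.exp (β*ε) * Real.exp ((n:ℝ)*ε) * Real.exp ε := by
      rw [show (β+(n:ℝ)+1)*ε = β*ε + ((n:ℝ)*ε + 1*ε) by ring, Real.exp_add, Real.exp_add, one_mul, mul_assoc]
    have e7 : Real.exp (((n:ℝ)-1)*ε) = Real.exp ((n:ℝ)*ε) / Real.exp ε := by
      rw [show ((n:ℝ)-1)*ε = (n:ℝ)*ε - 1*ε by ring, Real.exp_sub, one_mul]
    have e9 : Real.exp ((β+1)*ε) = Real.exp (β*ε) * Real.exp ε := by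
      rw [show (β+1)*ε = β*ε + 1*ε by ring, Real.exp_add, one_mul]
    have e10 : Real.exp ((β+2)*ε) = Real.exp (β*ε) * Real.exp ε^2 := by
      rw [show (β+2)*ε = β*ε + 2*ε by ring, Real.exp_add, hd]
    have e11 : Real.exp ((β+3)*ε) = Real.exp (β*ε) * Real.exp ε^3 := by
      rw [show (β+3)*ε = β*ε + 3*ε by ring, Real.exp_add, hd3]
    simp only [qPoch, Finset.prod_range_succ, Finset.prod_range_zero, pow_zero, pow_one,
      one_mul, mul_one, h1, h2, h3, h4, h5, e1, e2, e3, e4, e5, e6, e7, e9, e10, e11]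
    field_simp
    ring
  · rw [if_neg (Nat.not_even_iff_odd.mpr hn)]
    have T : Tendsto (fun ε : ℝ =>
        (1 + Real.exp ((-(n:ℝ))*ε)) *
          (M * Real.exp ((2*(1-(n:ℝ)))*ε) * ((1 - Real.exp (((n:ℝ)+1)*ε))/ε * (1 + Real.exp (((n:ℝ)+2)*ε))) *
              ((1 - Real.exp ((β+(n:ℝ))*ε))/ε * (1 + Real.exp ((β+(n:ℝ)+1)*ε))) * ((1 - Real.exp (((n:ℝ)-1)*ε))/ε) -
            (1 + Real.exp (1*ε)) * ((1 - Real.exp ((β+1)*ε))/ε * ((1 + Real.exp ((β+2)*ε)) * ((1 - Real.exp ((β+3)*ε))/ε))) * ((1 - Real.exp (((n:ℝ)+1)*ε))/ε)))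
        (nhdsWithin 0 ({0}ᶜ : Set ℝ))
        (nhds (2 * (M * 1 * ((-((n:ℝ)+1)) * 2) * ((-(β+(n:ℝ))) * 2) * (-((n:ℝ)-1)) -
            2 * ((-(β+1)) * (2 * (-(β+3)))) * (-((n:ℝ)+1))))) :=
      (tendsto_V _).mul
        (((((tendsto_const_nhds.mul (tendsto_E _)).mul ((tendsto_U _).mul (tendsto_V _))).mul
            ((tendsto_U _).mul (tendsto_V _))).mul (tendsto_U _)).sub
          (((tendsto_V _).mul ((tendsto_U _).mul ((tendsto_V _).mul (tendsto_U _)))).mul (tendsto_U _)))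
    rw [show (8 * (β + 1) * (β + 3) * (n + 1) - 8 * M * ((n : ℝ) ^ 2 - 1) * (n + β) : ℝ) =
        2 * (M * 1 * ((-((n:ℝ)+1)) * 2) * ((-(β+(n:ℝ))) * 2) * (-((n:ℝ)-1)) -
            2 * ((-(β+1)) * (2 * (-(β+3)))) * (-((n:ℝ)+1))) by ring]
    refine Filter.Tendsto.congr' ?_ T
    filter_upwards [self_mem_nhdsWithin] with ε hε
    replace hε : ε ≠ 0 := hε
    have hodd : Odd (n:ℤ) := (Int.odd_coe_nat n).mpr hn
    have s1 : ((-1:ℝ)) ^ (-(n:ℤ)) = -1 := Odd.neg_one_zpow hodd.neg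
    have s2 : ((-1:ℝ)) ^ (2*(1-(n:ℤ))) = 1 := Even.neg_one_zpow ⟨1-(n:ℤ), by ring⟩
    have s3 : ((-1:ℝ)) ^ ((n:ℤ)-1) = 1 := Even.neg_one_zpow (Odd.sub_odd hodd odd_one)
    have s4 : ((-1:ℝ)) ^ (n+1) = 1 := Even.neg_one_pow hn.add_one
    have s5 : ((-1:ℝ)) ^ n = -1 := hn.neg_one_pow
    have hd : ∀ x:ℝ, Real.exp (2*x) = Real.exp x^2 := fun x => by rw [two_mul, Real.exp_add, sq]
    have hd3 : ∀ x:ℝ, Real.exp (3*x) = Real.exp x^3 := fun x => by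
      rw [show (3:ℝ)*x = x + (x + x) by ring, Real.exp_add, Real.exp_add]; ring
    have h1 : (-Real.exp ε) ^ (-(n:ℤ)) = -(Real.exp ((n:ℝ)*ε))⁻¹ := by
      rw [negexp_zpow, s1]; push_cast
      rw [show -(n:ℝ)*ε = -((n:ℝ)*ε) by ring, Real.exp_neg]; ring
    have h2 : (-Real.exp ε) ^ (2*(1-(n:ℤ))) = Real.exp ε^2 / Real.exp ((n:ℝ)*ε)^2 := by
      rw [negexp_zpow, s2, one_mul]; push_cast
      rw [show (2*(1-(n:ℝ)))*ε = 2*ε - 2*((n:ℝ)*ε) by ring, Real.exp_sub, hd, hd]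
    have h3 : (-Real.exp ε) ^ ((n:ℤ)-1) = Real.exp ((n:ℝ)*ε) / Real.exp ε := by
      rw [negexp_zpow, s3, one_mul]; push_cast
      rw [show ((n:ℝ)-1)*ε = (n:ℝ)*ε - 1*ε by ring, Real.exp_sub, one_mul]
    have h4 : (-Real.exp ε) ^ (n+1) = Real.exp ((n:ℝ)*ε) * Real.exp ε := by
      rw [negexp_pow, s4, one_mul]; push_cast
      rw [show ((n:ℝ)+1)*ε = (n:ℝ)*ε + 1*ε by ring, Real.exp_add, one_mul]
    have h5 : (-Real.exp ε) ^ n = -Real.exp ((n:ℝ)*ε) := by rw [negexp_pow, s5]; ring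
    have e1 : Real.exp ((-(n:ℝ))*ε) = (Real.exp ((n:ℝ)*ε))⁻¹ := by rw [neg_mul, Real.exp_neg]
    have e2 : Real.exp ((2*(1-(n:ℝ)))*ε) = Real.exp ε^2 / Real.exp ((n:ℝ)*ε)^2 := by
      rw [show (2*(1-(n:ℝ)))*ε = 2*ε - 2*((n:ℝ)*ε) by ring, Real.exp_sub, hd, hd]
    have e3 : Real.exp (((n:ℝ)+1)*ε) = Real.exp ((n:ℝ)*ε) * Real.exp ε := by
      rw [show ((n:ℝ)+1)*ε = (n:ℝ)*ε + 1*ε by ring, Real.exp_add, one_mul]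
    have e4 : Real.exp (((n:ℝ)+2)*ε) = Real.exp ((n:ℝ)*ε) * Real.exp ε^2 := by
      rw [show ((n:ℝ)+2)*ε = (n:ℝ)*ε + 2*ε by ring, Real.exp_add, hd]
    have e5 : Real.exp ((β+(n:ℝ))*ε) = Real.exp (β*ε) * Real.exp ((n:ℝ)*ε) := by
      rw [show (β+(n:ℝ))*ε = β*ε + (n:ℝ)*ε by ring, Real.exp_add]
    have e6 : Real.exp ((β+(n:ℝ)+1)*ε) = Real.exp (β*ε) * Real.exp ((n:ℝ)*ε) * Real.exp ε := by
      rw [show (β+(n:ℝ)+1)*ε = β*ε + ((n:ℝ)*ε + 1*ε) by ring, Real.exp_add, Real.exp_add, one_mul, mul_assoc]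
    have e7 : Real.exp (((n:ℝ)-1)*ε) = Real.exp ((n:ℝ)*ε) / Real.exp ε := by
      rw [show ((n:ℝ)-1)*ε = (n:ℝ)*ε - 1*ε by ring, Real.exp_sub, one_mul]
    have e9 : Real.exp ((β+1)*ε) = Real.exp (β*ε) * Real.exp ε := by
      rw [show (β+1)*ε = β*ε + 1*ε by ring, Real.exp_add, one_mul]
    have e10 : Real.exp ((β+2)*ε) = Real.exp (β*ε) * Real.exp ε^2 := by
      rw [show (β+2)*ε = β*ε + 2*ε by ring, Real.exp_add, hd]
    have e11 : Real.exp ((β+3)*ε) = Real.exp (β*ε) * Real.exp ε^3 := by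
      rw [show (β+3)*ε = β*ε + 3*ε by ring, Real.exp_add, hd3]
    simp only [qPoch, Finset.prod_range_succ, Finset.prod_range_zero, pow_zero, pow_one,
      one_mul, mul_one, h1, h2, h3, h4, h5, e1, e2, e3, e4, e5, e6, e7, e9, e10, e11]
    field_simp
    ring
end

section
/- Fix real numbers M and β and let θ_n = (1 − (−1)^n)/2. Then for every integer n ≥ 0 and every real x ≠ 0, the operator L₀ applied to the monomial f(x) = x^n satisfies (L₀ f)(x) = [ −8M n(n+2)(n+1+β) + 8n(β+1)(β+3) + θ_n (16M n^3 + (24βM+48M)n^2 + (32M − 16β^2 + 8β^2 M − 48 + 48βM − 64β)n − 48β^2 − 8β^3 + 16βM + 8β^2 M − 48 − 88β) ] x^n + [ 8M n^3 + (24M+8βM)n^2 + (16M+16βM−8β^2−32β−24)n + θ_n ( −16M n^3 − (24M+16βM)n^2 + (64β+48+16β^2−16βM−8M)n + 32β + 24 + 8β^2 + 8βM ) ] x^{n−1} + [ 8M n^3 − 32M n + θ_n ( −16M n^3 − 8βM n^2 + 40M n + 8βM ) ] x^{n−2} + [ −8M n^3 + 32M n + θ_n ( 16M n^3 − 24M n^2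 − 40M n + 24M ) ] x^{n−3}, where for n < 3 the terms with negative powers of x have vanishing coefficients. -/
/-- The third-order differential-difference operator `L₀` of Dunkl type with
parameters `M, β`, acting on functions on `ℝ∖{0}`.  With `g(x) := f(−x)`, so that
`g'(x) = −f'(−x)`, `g''(x) = f''(−x)`, `g'''(x) = −f'''(−x)`, it reads
`(L₀f)(x) = (−8M+8Mx+8Mx²−8Mx³)g'''(x)
 + [−12M/x+24M+4βM+(36M+8βM)x−(12βM+48M)x²]g''(x)
 + (12Mx+4βMx²−12M/x−4βM)f''(x)
 + [(24M+16βM−8β²−32β−24)+24M/x²+(4β−12)M/x+(8β²−36βM−48M−4β²M+32β+24)x]g'(x)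
 + [(4β²M+12βM)x−(12+4β)M/x+24M+8βM]f'(x)
 + [12M/x³+4βM/x²+(12+4β²+4βM+16β)/x+(8βM+4β²M−44β−24−4β³−24β²)](f(x)−f(−x))`. -/
noncomputable def L0 (M β : ℝ) (f : ℝ → ℝ) (x : ℝ) : ℝ :=
  (-8 * M + 8 * M * x + 8 * M * x ^ 2 - 8 * M * x ^ 3) * (-(deriv^[3] f (-x))) +
    (-12 * M / x + 24 * M + 4 * β * M + (36 * M + 8 * β * M) * x -
        (12 * β * M + 48 * M) * x ^ 2) * (deriv^[2] f (-x)) +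
    (12 * M * x + 4 * β * M * x ^ 2 - 12 * M / x - 4 * β * M) * (deriv^[2] f x) +
    ((24 * M + 16 * β * M - 8 * β ^ 2 - 32 * β - 24) + 24 * M / x ^ 2 +
        (4 * β - 12) * M / x +
        (8 * β ^ 2 - 36 * β * M - 48 * M - 4 * β ^ 2 * M + 32 * β + 24) * x) *
      (-(deriv f (-x))) +
    ((4 * β ^ 2 * M + 12 * β * M) * x - (12 + 4 * β) * M / x + 24 * M + 8 * β * M) *
      (deriv f x) +
    (12 * M / x ^ 3 + 4 * β * M / x ^ 2 +
        (12 + 4 * β ^ 2 + 4 * β * M + 16 * β) / x +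
        (8 * β * M + 4 * β ^ 2 * M - 44 * β - 24 - 4 * β ^ 3 - 24 * β ^ 2)) *
      (f x - f (-x))

/-- Action of the operator `L₀` on monomials `x^n`, with `θ_n = (1−(−1)^n)/2`;
for `n < 3` the terms with negative powers of `x` have vanishing coefficients. -/
theorem L0_on_monomials (M β : ℝ) (n : ℕ) (x : ℝ) (hx : x ≠ 0) :
    L0 M β (fun t => t ^ n) x =
      (-8 * M * n * (n + 2) * (n + 1 + β) + 8 * n * (β + 1) * (β + 3) +
          (1 - (-1 : ℝ) ^ n) / 2 *
            (16 * M * (n : ℝ) ^ 3 + (24 * β * M + 48 * M) * (n : ℝ) ^ 2 +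
              (32 * M - 16 * β ^ 2 + 8 * β ^ 2 * M - 48 + 48 * β * M - 64 * β) * n -
              48 * β ^ 2 - 8 * β ^ 3 + 16 * β * M + 8 * β ^ 2 * M - 48 - 88 * β)) *
          x ^ (n : ℤ) +
        (8 * M * (n : ℝ) ^ 3 + (24 * M + 8 * β * M) * (n : ℝ) ^ 2 +
            (16 * M + 16 * β * M - 8 * β ^ 2 - 32 * β - 24) * n +
            (1 - (-1 : ℝ) ^ n) / 2 *
              (-16 * M * (n : ℝ) ^ 3 - (24 * M + 16 * β * M) * (n : ℝ) ^ 2 +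
                (64 * β + 48 + 16 * β ^ 2 - 16 * β * M - 8 * M) * n +
                32 * β + 24 + 8 * β ^ 2 + 8 * β * M)) *
          x ^ ((n : ℤ) - 1) +
        (8 * M * (n : ℝ) ^ 3 - 32 * M * n +
            (1 - (-1 : ℝ) ^ n) / 2 *
              (-16 * M * (n : ℝ) ^ 3 - 8 * β * M * (n : ℝ) ^ 2 + 40 * M * n +
                8 * β * M)) *
          x ^ ((n : ℤ) - 2) +
        (-8 * M * (n : ℝ) ^ 3 + 32 * M * n +
            (1 - (-1 : ℝ) ^ n) / 2 *
              (16 * M * (n : ℝ) ^ 3 - 24 * M * (n : ℝ) ^ 2 - 40 * M * n + 24 * M)) *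
          x ^ ((n : ℤ) - 3) := by

  have hfun : (fun t : ℝ => t ^ n) = fun t : ℝ => t ^ (n : ℤ) := by
    funext t; exact (zpow_natCast t n).symm
  have hnx : (-x : ℝ) ≠ 0 := neg_ne_zero.mpr hx
  have hneg : ∀ m : ℤ, (-x) ^ m = (-1 : ℝ) ^ m * x ^ m := by
    intro m; rw [← neg_one_mul, mul_zpow]
  have h1 : ((-1 : ℝ)) ^ ((n : ℤ) - 1) = (-1 : ℝ) ^ n * (-1) := by
    rw [zpow_sub₀ (by norm_num : (-1:ℝ) ≠ 0), zpow_natCast]; simp [div_neg]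
  have h2 : ((-1 : ℝ)) ^ ((n : ℤ) - 2) = (-1 : ℝ) ^ n := by
    rw [zpow_sub₀ (by norm_num : (-1:ℝ) ≠ 0), zpow_natCast]; norm_num
  have h3 : ((-1 : ℝ)) ^ ((n : ℤ) - 3) = (-1 : ℝ) ^ n * (-1) := by
    rw [zpow_sub₀ (by norm_num : (-1:ℝ) ≠ 0), zpow_natCast,
      show ((-1:ℝ))^(3:ℤ) = -1 by norm_num]; simp [div_neg]
  have hnn : ((-1:ℝ)) ^ ((n:ℤ)) = (-1:ℝ)^n := zpow_natCast _ _
  have e0 : x ^ ((n : ℤ)) = x ^ ((n : ℤ) - 3) * x ^ (3:ℕ) := by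
    rw [← zpow_natCast x 3, ← zpow_add₀ hx]; congr 1; push_cast; ring
  have e1 : x ^ ((n : ℤ) - 1) = x ^ ((n : ℤ) - 3) * x ^ (2:ℕ) := by
    rw [← zpow_natCast x 2, ← zpow_add₀ hx]; congr 1; push_cast; ring
  have e2 : x ^ ((n : ℤ) - 2) = x ^ ((n : ℤ) - 3) * x := by
    have h : x ^ ((n : ℤ) - 2) = x ^ ((n : ℤ) - 3) * x ^ (1:ℤ) := by
      rw [← zpow_add₀ hx]; congr 1; ring
    simpa using h
  have k1 : ∀ y : ℝ, deriv (fun t : ℝ => t ^ (n : ℤ)) y = (n : ℝ) * y ^ ((n : ℤ) - 1) := by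
    intro y; simpa using deriv_zpow (n : ℤ) y
  have k2 : ∀ y : ℝ, deriv^[2] (fun t : ℝ => t ^ (n : ℤ)) y
      = (n : ℝ) * ((n : ℝ) - 1) * y ^ ((n : ℤ) - 2) := by
    intro y
    have := iter_deriv_zpow (n : ℤ) y 2
    simpa [Finset.prod_range_succ, mul_assoc] using this
  have k3 : ∀ y : ℝ, deriv^[3] (fun t : ℝ => t ^ (n : ℤ)) y
      = (n : ℝ) * ((n : ℝ) - 1) * ((n : ℝ) - 2) * y ^ ((n : ℤ) - 3) := by
    intro y
    have := iter_deriv_zpow (n : ℤ) y 3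
    simpa [Finset.prod_range_succ, mul_assoc] using this
  rw [hfun]
  simp only [L0, k1, k2, k3, hneg, h1, h2, h3, hnn, e0, e1, e2]
  rcases Nat.even_or_odd n with h | h
  · rw [h.neg_one_pow]
    field_simp
    ring
  · rw [h.neg_one_pow]
    field_simp
    ring
end

section
/- Fix real numbers M and β with (5+β) ≠ 0 and (2M−β−1) ≠ 0. Define the polynomial P̃₂(x) = x² − (2(4M−β−1)/((5+β)(2M−β−1))) x + 2(β+1)/((5+β)(2M−β−1)) and the number λ̃₂ = (β+3)(16β+16−64M). Then for every real x ≠ 0, (L₀ P̃₂)(x) = λ̃₂ · P̃₂(x). -/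
section MonicQuadratic

variable (p q : ℝ)

theorem deriv_monic_quadratic :
    deriv (fun t : ℝ => t ^ 2 - p * t + q) = fun t => 2 * t - p := by
  funext t
  exact ((((hasDerivAt_id t).pow 2).sub ((hasDerivAt_id t).const_mul p)).add_const q).deriv.trans
    (by simp)

theorem iterate_deriv_two_monic_quadratic :
    deriv^[2] (fun t : ℝ => t ^ 2 - p * t + q) = fun _ => 2 := by
  rw [Function.iterate_succ, Function.comp_apply, Function.iterate_one, deriv_monic_quadratic]
  funext t
  exact (((hasDerivAt_id t).const_mul 2).sub_const p).deriv.trans (by simp)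

theorem iterate_deriv_three_monic_quadratic :
    deriv^[3] (fun t : ℝ => t ^ 2 - p * t + q) = fun _ => 0 := by
  rw [Function.iterate_succ_apply', iterate_deriv_two_monic_quadratic]
  exact deriv_const' 2

theorem L0_monic_quadratic (M β x : ℝ) (hx : x ≠ 0) :
    L0 M β (fun t => t ^ 2 - p * t + q) x =
      (β + 3) * (16 * (β + 1 - 4 * M) * x ^ 2
        - (8 * (β + 1) * (2 * M - β - 3) * p + 16 * (β + 1 - 4 * M)) * x
        - 16 * (β + 1) * p) := by
  simp only [L0, deriv_monic_quadratic, iterate_deriv_two_monic_quadratic,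
    iterate_deriv_three_monic_quadratic]
  field_simp
  ring

theorem L0_monic_quadratic_eq_eigenvalue_mul (M β x : ℝ) (hx : x ≠ 0)
    (hp : (5 + β) * (2 * M - β - 1) * p = 2 * (4 * M - β - 1))
    (hq : (β + 1) * p + (β + 1 - 4 * M) * q = 0) :
    L0 M β (fun t => t ^ 2 - p * t + q) x =
      (β + 3) * (16 * β + 16 - 64 * M) * (x ^ 2 - p * x + q) := by
  rw [L0_monic_quadratic p q M β x hx]
  linear_combination (-8 * (β + 3) * x) * hp - 16 * (β + 3) * hq

end MonicQuadratic

/-- The degree-2 monic −1 Krall-Jacobi polynomial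
`P̃₂(x) = x² − (2(4M−β−1)/((5+β)(2M−β−1)))x + 2(β+1)/((5+β)(2M−β−1))`
is an eigenfunction of `L₀` with eigenvalue `λ̃₂ = (β+3)(16β+16−64M)`. -/
theorem L0_eigen_degree_two (M β : ℝ) (h1 : 5 + β ≠ 0) (h2 : 2 * M - β - 1 ≠ 0)
    (x : ℝ) (hx : x ≠ 0) :
    L0 M β (fun t => t ^ 2 - 2 * (4 * M - β - 1) / ((5 + β) * (2 * M - β - 1)) * t +
        2 * (β + 1) / ((5 + β) * (2 * M - β - 1))) x =
      (β + 3) * (16 * β + 16 - 64 * M) *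
        (x ^ 2 - 2 * (4 * M - β - 1) / ((5 + β) * (2 * M - β - 1)) * x +
          2 * (β + 1) / ((5 + β) * (2 * M - β - 1))) := by
  have hd : (5 + β) * (2 * M - β - 1) ≠ 0 := mul_ne_zero h1 h2
  apply L0_monic_quadratic_eq_eigenvalue_mul _ _ M β x hx
  · exact mul_div_cancel₀ _ hd
  · field_simp
    ring
end

section
/- Fix real numbers M and β with (7+β) ≠ 0, (5+β) ≠ 0 and (−4M+β+1) ≠ 0. Define the polynomial P̃₃(x) = x³ − (4(−2M+1+β)/((7+β)(−4M+β+1))) x² − (4/(7+β)) x + 8(1+β)/((7+β)(5+β)(−4M+β+1)) and the number λ̃₃ = (3+β)(5+β)(32M−8−8β). Then for every real x ≠ 0, (L₀ P̃₃)(x) = λ̃₃ · P̃₃(x). -/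
/-
On cubics the singular coefficients of `L₀` cancel, and `L₀` acts as an explicit
upper-triangular map on the coefficients `(a, b, c, d)` of `a t³ + b t² + c t + d`, with
`λ̃₃ = (3+β)(5+β)(32M−8−8β)` on the diagonal at `t³` (and `0` at `1`). The eigen-equation
for a monic cubic therefore reduces to three linear conditions on its lower coefficients,
which determine `P̃₃`.
-/

theorem deriv_affine (a b : ℝ) : deriv (fun t : ℝ => a * t + b) = fun _ => a := by
  funext t
  simp

theorem deriv_quadratic (a b c : ℝ) :
    deriv (fun t : ℝ => a * t ^ 2 + b * t + c) = fun t => 2 * a * t + b := by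
  funext t
  exact ((((hasDerivAt_pow 2 t).const_mul a).add ((hasDerivAt_id t).const_mul b)).add_const c
    |>.deriv).trans (by ring)

theorem deriv_cubic (a b c d : ℝ) :
    deriv (fun t : ℝ => a * t ^ 3 + b * t ^ 2 + c * t + d) =
      fun t => 3 * a * t ^ 2 + 2 * b * t + c := by
  funext t
  exact (((((hasDerivAt_pow 3 t).const_mul a).add ((hasDerivAt_pow 2 t).const_mul b)).add
    ((hasDerivAt_id t).const_mul c)).add_const d |>.deriv).trans (by ring)

theorem L0_cubic (M β a b c d : ℝ) {x : ℝ} (hx : x ≠ 0) :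
    L0 M β (fun t => a * t ^ 3 + b * t ^ 2 + c * t + d) x =
      (3 + β) * (5 + β) * (32 * M - 8 - 8 * β) * a * x ^ 3
        + 16 * (3 + β) * (2 * (-2 * M + 1 + β) * a + (-4 * M + β + 1) * b) * x ^ 2
        + (8 * (1 + β) * (3 + β) * (2 * M - β - 3) * c
            - 16 * (3 + β) * (-4 * M + β + 1) * b - 64 * M * (3 + β) * a) * x
        + 16 * (1 + β) * (3 + β) * c := by
  have hderiv2 : deriv^[2] (fun t => a * t ^ 3 + b * t ^ 2 + c * t + d) =
      fun t => 2 * (3 * a) * t + 2 * b := by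
    rw [Function.iterate_succ_apply', Function.iterate_one, deriv_cubic, deriv_quadratic]
  have hderiv3 : deriv^[3] (fun t => a * t ^ 3 + b * t ^ 2 + c * t + d) =
      fun _ => 2 * (3 * a) := by
    rw [Function.iterate_succ_apply', hderiv2, deriv_affine]
  rw [L0, hderiv3, hderiv2, deriv_cubic]
  field_simp
  ring

theorem L0_monic_cubic_eq_mul_of_coeffs (M β A B C : ℝ)
    (hA : (3 + β) * (5 + β) * (32 * M - 8 - 8 * β) * A =
      16 * (3 + β) * ((-4 * M + β + 1) * A - 2 * (-2 * M + 1 + β)))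
    (hB : (3 + β) * (5 + β) * (32 * M - 8 - 8 * β) * B =
      8 * (1 + β) * (3 + β) * (2 * M - β - 3) * B - 16 * (3 + β) * (-4 * M + β + 1) * A
        + 64 * M * (3 + β))
    (hC : (3 + β) * (5 + β) * (32 * M - 8 - 8 * β) * C = -16 * (1 + β) * (3 + β) * B)
    {x : ℝ} (hx : x ≠ 0) :
    L0 M β (fun t => t ^ 3 - A * t ^ 2 - B * t + C) x =
      (3 + β) * (5 + β) * (32 * M - 8 - 8 * β) * (x ^ 3 - A * x ^ 2 - B * x + C) := by
  have h := L0_cubic M β 1 (-A) (-B) C hx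
  simp only [one_mul, neg_mul, ← sub_eq_add_neg] at h
  rw [h]
  linear_combination x ^ 2 * hA + x * hB - hC

/-- The degree-3 monic −1 Krall-Jacobi polynomial
`P̃₃(x) = x³ − (4(−2M+1+β)/((7+β)(−4M+β+1)))x² − (4/(7+β))x
 + 8(1+β)/((7+β)(5+β)(−4M+β+1))`
is an eigenfunction of `L₀` with eigenvalue `λ̃₃ = (3+β)(5+β)(32M−8−8β)`. -/
theorem L0_eigen_degree_three (M β : ℝ) (h1 : 7 + β ≠ 0) (h2 : 5 + β ≠ 0)
    (h3 : -4 * M + β + 1 ≠ 0) (x : ℝ) (hx : x ≠ 0) :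
    L0 M β (fun t => t ^ 3 - 4 * (-2 * M + 1 + β) / ((7 + β) * (-4 * M + β + 1)) * t ^ 2 -
        4 / (7 + β) * t + 8 * (1 + β) / ((7 + β) * (5 + β) * (-4 * M + β + 1))) x =
      (3 + β) * (5 + β) * (32 * M - 8 - 8 * β) *
        (x ^ 3 - 4 * (-2 * M + 1 + β) / ((7 + β) * (-4 * M + β + 1)) * x ^ 2 -
          4 / (7 + β) * x + 8 * (1 + β) / ((7 + β) * (5 + β) * (-4 * M + β + 1))) := by
  -- otherwise `field_simp` rewrites `-4 * M` and no longer recognises `h3`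
  set D := -4 * M + β + 1 with hD
  apply L0_monic_cubic_eq_mul_of_coeffs _ _ _ _ _ _ _ _ hx <;> field_simp <;> rw [hD] <;> ring
end

section
/- Fix a real number β > −1 and an integer n ≥ 1. For ε ∈ ℝ, ε ≠ 0, set q = −e^{ε}, b = −e^{βε}, a = q², and define A_m = q^m (1−aq^{m+1})(1−abq^{m+1}) / ((1−abq^{2m+1})(1−abq^{2m+2})), C_m = a q^m (1−q^m)(1−bq^m) / ((1−abq^{2m+1})(1−abq^{2m})), and u_n = A_{n−1} C_n. Then, as ε → 0 (ε ≠ 0), u_n tends to −n(n+2)/((2n+1+β)(2n+3+β)) if n is even, and to −(n+β)(n+2+β)/((2n+1+β)(2n+3+β)) if n is odd. -/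
open Filter Real

private lemma slopeLim (c : ℝ) :
    Tendsto (fun ε : ℝ => (1 - Real.exp (c*ε))/ε) (nhdsWithin 0 ({0}ᶜ : Set ℝ)) (nhds (-c)) := by
  have h : HasDerivAt (fun x : ℝ => Real.exp (c*x)) c 0 := by
    simpa using ((hasDerivAt_id (0:ℝ)).const_mul c).exp
  have h2 := (hasDerivAt_iff_tendsto_slope.1 h).neg
  refine h2.congr (fun ε => ?_)
  simp [slope_def_field]
  rw [← neg_div, neg_sub]

private lemma lim_slope_mixed (β : ℝ) (k : ℕ) :
    Tendsto (fun ε : ℝ => (1 - Real.exp ε ^ k * Real.exp (β*ε))/ε)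
      (nhdsWithin 0 ({0}ᶜ : Set ℝ)) (nhds (-((k:ℝ)+β))) := by
  refine (slopeLim ((k:ℝ)+β)).congr (fun ε => ?_)
  rw [add_mul, Real.exp_add, ← Real.exp_nat_mul]

private lemma lim_pow (k : ℕ) :
    Tendsto (fun ε : ℝ => Real.exp ε ^ k) (nhdsWithin 0 ({0}ᶜ : Set ℝ)) (nhds 1) := by
  have hc : Continuous (fun ε : ℝ => Real.exp ε ^ k) := by continuity
  have h : Tendsto (fun ε : ℝ => Real.exp ε ^ k) (nhdsWithin 0 ({0}ᶜ : Set ℝ))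
      (nhds (Real.exp 0 ^ k)) := (hc.tendsto 0).mono_left nhdsWithin_le_nhds
  norm_num at h; exact h

private lemma lim_neg_pow (k : ℕ) :
    Tendsto (fun ε : ℝ => -(Real.exp ε ^ k)) (nhdsWithin 0 ({0}ᶜ : Set ℝ)) (nhds (-1)) := by
  simpa using (lim_pow k).neg

private lemma lim_one_add_pow (k : ℕ) :
    Tendsto (fun ε : ℝ => 1 + Real.exp ε ^ k) (nhdsWithin 0 ({0}ᶜ : Set ℝ)) (nhds 2) := by
  have h := (tendsto_const_nhds (x := (1:ℝ)) (f := nhdsWithin (0:ℝ) ({0}ᶜ : Set ℝ))).add (lim_pow k)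
  norm_num at h; exact h

private lemma lim_one_add (β : ℝ) (k : ℕ) :
    Tendsto (fun ε : ℝ => 1 + Real.exp ε ^ k * Real.exp (β*ε)) (nhdsWithin 0 ({0}ᶜ : Set ℝ))
      (nhds 2) := by
  have hc : Continuous (fun ε : ℝ => 1 + Real.exp ε ^ k * Real.exp (β*ε)) := by continuity
  have h : Tendsto (fun ε : ℝ => 1 + Real.exp ε ^ k * Real.exp (β*ε))
      (nhdsWithin 0 ({0}ᶜ : Set ℝ)) (nhds (1 + Real.exp 0 ^ k * Real.exp (β*0))) :=
    (hc.tendsto 0).mono_left nhdsWithin_le_nhds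
  norm_num at h; exact h

private lemma lim_slope_pow (k : ℕ) :
    Tendsto (fun ε : ℝ => (1 - Real.exp ε ^ k)/ε) (nhdsWithin 0 ({0}ᶜ : Set ℝ))
      (nhds (-(k:ℝ))) := by
  refine (slopeLim (k:ℝ)).congr (fun ε => ?_)
  rw [← Real.exp_nat_mul]

private lemma div_div_aux (a b c : ℝ) (hc : c ≠ 0) : (a/c)/(b/c) = a/b := by
  obtain rfl | hb := eq_or_ne b 0
  · simp
  · field_simp

/-- `q → −1` limit of the little q-Jacobi recurrence coefficient `u_n = A_{n−1} C_n`
with `a = q²`, where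
`A_m = q^m (1−aq^{m+1})(1−abq^{m+1})/((1−abq^{2m+1})(1−abq^{2m+2}))` and
`C_m = a q^m (1−q^m)(1−bq^m)/((1−abq^{2m+1})(1−abq^{2m}))`:
under `q = −e^ε`, `b = −e^{βε}`, `u_n` tends to
`−n(n+2)/((2n+1+β)(2n+3+β))` for even `n` and
`−(n+β)(n+2+β)/((2n+1+β)(2n+3+β))` for odd `n`. -/
theorem un_limit (β : ℝ) (hβ : -1 < β) (n : ℕ) (hn : 1 ≤ n) :
    Filter.Tendsto
      (fun ε : ℝ =>
        let q : ℝ := -Real.exp ε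
        let b : ℝ := -Real.exp (β * ε)
        let a : ℝ := q ^ 2
        (q ^ (n - 1) * (1 - a * q ^ n) * (1 - a * b * q ^ n) /
            ((1 - a * b * q ^ (2 * (n - 1) + 1)) * (1 - a * b * q ^ (2 * (n - 1) + 2)))) *
          (a * q ^ n * (1 - q ^ n) * (1 - b * q ^ n) /
            ((1 - a * b * q ^ (2 * n + 1)) * (1 - a * b * q ^ (2 * n)))))
      (nhdsWithin 0 ({0}ᶜ : Set ℝ))
      (nhds (if Even n then
          -((n : ℝ) * (n + 2)) / ((2 * n + 1 + β) * (2 * n + 3 + β))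
        else
          -(((n : ℝ) + β) * (n + 2 + β)) / ((2 * n + 1 + β) * (2 * n + 3 + β)))) := by
  obtain ⟨m, rfl⟩ : ∃ m, n = m + 1 := ⟨n - 1, (Nat.succ_pred_eq_of_pos hn).symm⟩
  have hm0 : (0:ℝ) ≤ (m:ℝ) := Nat.cast_nonneg m
  have hd1 : (0:ℝ) < 2*(m:ℝ)+3+β := by nlinarith
  have hd2 : (0:ℝ) < 2*(m:ℝ)+5+β := by nlinarith
  have hden : Tendsto (fun ε : ℝ =>
      ((1 - Real.exp ε ^ (2*m+3) * Real.exp (β*ε))/ε) * (1 + Real.exp ε ^ (2*m+4) * Real.exp (β*ε))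
        * (((1 - Real.exp ε ^ (2*m+5) * Real.exp (β*ε))/ε)
            * (1 + Real.exp ε ^ (2*m+4) * Real.exp (β*ε))))
      (nhdsWithin 0 ({0}ᶜ : Set ℝ))
      (nhds (-(((2*m+3:ℕ):ℝ)+β) * 2 * (-(((2*m+5:ℕ):ℝ)+β) * 2))) :=
    ((lim_slope_mixed β (2*m+3)).mul (lim_one_add β (2*m+4))).mul
      ((lim_slope_mixed β (2*m+5)).mul (lim_one_add β (2*m+4)))
  have hdpos : (0:ℝ) < -(((2*m+3:ℕ):ℝ)+β) * 2 * (-(((2*m+5:ℕ):ℝ)+β) * 2) := by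
    push_cast; nlinarith [mul_pos hd1 hd2]
  rcases Nat.even_or_odd m with hme | hmo
  · -- m even, n = m+1 odd
    have hodd : ¬ Even (m+1) := by simp [Nat.even_add_one, Nat.not_odd_iff_even.2 hme]
    rw [if_neg hodd]
    have hsm : ((-1:ℝ))^m = 1 := hme.neg_one_pow
    have hnum : Tendsto (fun ε : ℝ =>
        Real.exp ε ^ m * (1 + Real.exp ε ^ (m+3)) * ((1 - Real.exp ε ^ (m+3) * Real.exp (β*ε))/ε)
          * (-(Real.exp ε ^ (m+3))) * (1 + Real.exp ε ^ (m+1))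
          * ((1 - Real.exp ε ^ (m+1) * Real.exp (β*ε))/ε))
        (nhdsWithin 0 ({0}ᶜ : Set ℝ))
        (nhds (1 * 2 * (-(((m+3:ℕ):ℝ)+β)) * (-1) * 2 * (-(((m+1:ℕ):ℝ)+β)))) :=
      (((((lim_pow m).mul (lim_one_add_pow (m+3))).mul (lim_slope_mixed β (m+3))).mul
        (lim_neg_pow (m+3))).mul (lim_one_add_pow (m+1))).mul (lim_slope_mixed β (m+1))
    have hG := hnum.div hden hdpos.ne'
    have hval : -(((m+1:ℕ):ℝ) + β) * (((m+1:ℕ):ℝ) + 2 + β) /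
          ((2 * ((m+1:ℕ):ℝ) + 1 + β) * (2 * ((m+1:ℕ):ℝ) + 3 + β)) =
        (1 * 2 * (-(((m+3:ℕ):ℝ)+β)) * (-1) * 2 * (-(((m+1:ℕ):ℝ)+β))) /
          (-(((2*m+3:ℕ):ℝ)+β) * 2 * (-(((2*m+5:ℕ):ℝ)+β) * 2)) := by
      rw [div_eq_div_iff (by push_cast; nlinarith [mul_pos hd1 hd2]) hdpos.ne']
      push_cast; ring
    rw [show -((((m+1:ℕ)):ℝ) + β) * (((m+1:ℕ):ℝ) + 2 + β) = -(((((m+1:ℕ)):ℝ) + β) * ((((m+1:ℕ)):ℝ) + 2 + β)) by ring] at hval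
    rw [hval]
    refine Filter.Tendsto.congr' ?_ hG
    filter_upwards [self_mem_nhdsWithin] with ε hε
    have hε' : ε ≠ 0 := hε
    show _ =
      ((-Real.exp ε) ^ m * (1 - (-Real.exp ε)^2 * (-Real.exp ε) ^ (m+1)) *
          (1 - (-Real.exp ε)^2 * (-Real.exp (β*ε)) * (-Real.exp ε) ^ (m+1)) /
        ((1 - (-Real.exp ε)^2 * (-Real.exp (β*ε)) * (-Real.exp ε) ^ (2*m+1)) *
          (1 - (-Real.exp ε)^2 * (-Real.exp (β*ε)) * (-Real.exp ε) ^ (2*m+2)))) *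
      ((-Real.exp ε)^2 * (-Real.exp ε) ^ (m+1) * (1 - (-Real.exp ε) ^ (m+1)) *
          (1 - (-Real.exp (β*ε)) * (-Real.exp ε) ^ (m+1)) /
        ((1 - (-Real.exp ε)^2 * (-Real.exp (β*ε)) * (-Real.exp ε) ^ (2*(m+1)+1)) *
          (1 - (-Real.exp ε)^2 * (-Real.exp (β*ε)) * (-Real.exp ε) ^ (2*(m+1)))))
    simp only [Pi.div_apply]
    have hq : ∀ k : ℕ, (-Real.exp ε)^k = (-1:ℝ)^k * Real.exp ε^k := fun k => by rw [neg_pow]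
    have hb3 : (-Real.exp (β*ε)) = (-1) * Real.exp (β*ε) := by ring
    have h3 : ((-1:ℝ))^3 = -1 := by norm_num
    rw [div_mul_div_comm]
    have hN : Real.exp ε ^ m * (1 + Real.exp ε ^ (m+3)) *
          ((1 - Real.exp ε ^ (m+3) * Real.exp (β*ε))/ε)
          * (-(Real.exp ε ^ (m+3))) * (1 + Real.exp ε ^ (m+1))
          * ((1 - Real.exp ε ^ (m+1) * Real.exp (β*ε))/ε) =
        ((-Real.exp ε) ^ m * (1 - (-Real.exp ε)^2 * (-Real.exp ε) ^ (m+1)) *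
          (1 - (-Real.exp ε)^2 * (-Real.exp (β*ε)) * (-Real.exp ε) ^ (m+1)) *
        ((-Real.exp ε)^2 * (-Real.exp ε) ^ (m+1) * (1 - (-Real.exp ε) ^ (m+1)) *
          (1 - (-Real.exp (β*ε)) * (-Real.exp ε) ^ (m+1)))) / ε^2 := by
      simp only [hq, hb3, pow_add, pow_mul, neg_one_sq, one_pow, pow_one, h3, hsm]
      field_simp
      ring
    have hD : ((1 - Real.exp ε ^ (2*m+3) * Real.exp (β*ε))/ε) *
          (1 + Real.exp ε ^ (2*m+4) * Real.exp (β*ε))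
          * (((1 - Real.exp ε ^ (2*m+5) * Real.exp (β*ε))/ε)
            * (1 + Real.exp ε ^ (2*m+4) * Real.exp (β*ε))) =
        ((1 - (-Real.exp ε)^2 * (-Real.exp (β*ε)) * (-Real.exp ε) ^ (2*m+1)) *
          (1 - (-Real.exp ε)^2 * (-Real.exp (β*ε)) * (-Real.exp ε) ^ (2*m+2)) *
        ((1 - (-Real.exp ε)^2 * (-Real.exp (β*ε)) * (-Real.exp ε) ^ (2*(m+1)+1)) *
          (1 - (-Real.exp ε)^2 * (-Real.exp (β*ε)) * (-Real.exp ε) ^ (2*(m+1))))) / ε^2 := by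
      simp only [hq, hb3, pow_add, pow_mul, neg_one_sq, one_pow, pow_one, h3, hsm]
      field_simp
      ring
    rw [hN, hD, div_div_aux _ _ _ (pow_ne_zero 2 hε')]
  · -- m odd, n = m+1 even
    have heven : Even (m+1) := by simpa [Nat.even_add_one] using Nat.not_even_iff_odd.2 hmo
    rw [if_pos heven]
    have hsm : ((-1:ℝ))^m = -1 := hmo.neg_one_pow
    have hnum : Tendsto (fun ε : ℝ =>
        (-(Real.exp ε ^ m)) * ((1 - Real.exp ε ^ (m+3))/ε)
          * (1 + Real.exp ε ^ (m+3) * Real.exp (β*ε))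
          * (Real.exp ε ^ (m+3)) * ((1 - Real.exp ε ^ (m+1))/ε)
          * (1 + Real.exp ε ^ (m+1) * Real.exp (β*ε)))
        (nhdsWithin 0 ({0}ᶜ : Set ℝ))
        (nhds ((-1) * (-((m+3:ℕ):ℝ)) * 2 * 1 * (-((m+1:ℕ):ℝ)) * 2)) :=
      (((((lim_neg_pow m).mul (lim_slope_pow (m+3))).mul (lim_one_add β (m+3))).mul
        (lim_pow (m+3))).mul (lim_slope_pow (m+1))).mul (lim_one_add β (m+1))
    have hG := hnum.div hden hdpos.ne'
    have hval : -(((m+1:ℕ):ℝ) * (((m+1:ℕ):ℝ) + 2)) /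
          ((2 * ((m+1:ℕ):ℝ) + 1 + β) * (2 * ((m+1:ℕ):ℝ) + 3 + β)) =
        ((-1) * (-((m+3:ℕ):ℝ)) * 2 * 1 * (-((m+1:ℕ):ℝ)) * 2) /
          (-(((2*m+3:ℕ):ℝ)+β) * 2 * (-(((2*m+5:ℕ):ℝ)+β) * 2)) := by
      rw [div_eq_div_iff (by push_cast; nlinarith [mul_pos hd1 hd2]) hdpos.ne']
      push_cast; ring
    rw [hval]
    refine Filter.Tendsto.congr' ?_ hG
    filter_upwards [self_mem_nhdsWithin] with ε hε
    have hε' : ε ≠ 0 := hε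
    show _ =
      ((-Real.exp ε) ^ m * (1 - (-Real.exp ε)^2 * (-Real.exp ε) ^ (m+1)) *
          (1 - (-Real.exp ε)^2 * (-Real.exp (β*ε)) * (-Real.exp ε) ^ (m+1)) /
        ((1 - (-Real.exp ε)^2 * (-Real.exp (β*ε)) * (-Real.exp ε) ^ (2*m+1)) *
          (1 - (-Real.exp ε)^2 * (-Real.exp (β*ε)) * (-Real.exp ε) ^ (2*m+2)))) *
      ((-Real.exp ε)^2 * (-Real.exp ε) ^ (m+1) * (1 - (-Real.exp ε) ^ (m+1)) *
          (1 - (-Real.exp (β*ε)) * (-Real.exp ε) ^ (m+1)) /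
        ((1 - (-Real.exp ε)^2 * (-Real.exp (β*ε)) * (-Real.exp ε) ^ (2*(m+1)+1)) *
          (1 - (-Real.exp ε)^2 * (-Real.exp (β*ε)) * (-Real.exp ε) ^ (2*(m+1)))))
    simp only [Pi.div_apply]
    have hq : ∀ k : ℕ, (-Real.exp ε)^k = (-1:ℝ)^k * Real.exp ε^k := fun k => by rw [neg_pow]
    have hb3 : (-Real.exp (β*ε)) = (-1) * Real.exp (β*ε) := by ring
    have h3 : ((-1:ℝ))^3 = -1 := by norm_num
    rw [div_mul_div_comm]
    have hN : (-(Real.exp ε ^ m)) * ((1 - Real.exp ε ^ (m+3))/ε)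
          * (1 + Real.exp ε ^ (m+3) * Real.exp (β*ε))
          * (Real.exp ε ^ (m+3)) * ((1 - Real.exp ε ^ (m+1))/ε)
          * (1 + Real.exp ε ^ (m+1) * Real.exp (β*ε)) =
        ((-Real.exp ε) ^ m * (1 - (-Real.exp ε)^2 * (-Real.exp ε) ^ (m+1)) *
          (1 - (-Real.exp ε)^2 * (-Real.exp (β*ε)) * (-Real.exp ε) ^ (m+1)) *
        ((-Real.exp ε)^2 * (-Real.exp ε) ^ (m+1) * (1 - (-Real.exp ε) ^ (m+1)) *
          (1 - (-Real.exp (β*ε)) * (-Real.exp ε) ^ (m+1)))) / ε^2 := by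
      simp only [hq, hb3, pow_add, pow_mul, neg_one_sq, one_pow, pow_one, h3, hsm]
      field_simp
      ring
    have hD : ((1 - Real.exp ε ^ (2*m+3) * Real.exp (β*ε))/ε) *
          (1 + Real.exp ε ^ (2*m+4) * Real.exp (β*ε))
          * (((1 - Real.exp ε ^ (2*m+5) * Real.exp (β*ε))/ε)
            * (1 + Real.exp ε ^ (2*m+4) * Real.exp (β*ε))) =
        ((1 - (-Real.exp ε)^2 * (-Real.exp (β*ε)) * (-Real.exp ε) ^ (2*m+1)) *
          (1 - (-Real.exp ε)^2 * (-Real.exp (β*ε)) * (-Real.exp ε) ^ (2*m+2)) *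
        ((1 - (-Real.exp ε)^2 * (-Real.exp (β*ε)) * (-Real.exp ε) ^ (2*(m+1)+1)) *
          (1 - (-Real.exp ε)^2 * (-Real.exp (β*ε)) * (-Real.exp ε) ^ (2*(m+1))))) / ε^2 := by
      simp only [hq, hb3, pow_add, pow_mul, neg_one_sq, one_pow, pow_one, h3, hsm]
      field_simp
      ring
    rw [hN, hD, div_div_aux _ _ _ (pow_ne_zero 2 hε')]
end

section
/- Fix a real number β > −1 and an integer n ≥ 0. For ε ∈ ℝ, ε ≠ 0, set q = −e^{ε}, b = −e^{βε}, a = q², and define A_m = q^m (1−aq^{m+1})(1−abq^{m+1}) / ((1−abq^{2m+1})(1−abq^{2m+2})), C_m = a q^m (1−q^m)(1−bq^m) / ((1−abq^{2m+1})(1−abq^{2m})), and b_n = A_n + C_n. Then, as ε → 0 (ε ≠ 0), b_n tends to (−1)^n, i.e. to 1 if n is even and to −1 if n is odd. -/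
/-!
Under `q = -e^ε`, `b = -e^{βε}`, `a = q²` every factor of `A_n` and `C_n` has the form
`1 ± e^{cε}`, so it tends to `2` or vanishes to first order like `-cε`. Exactly one numerator
factor of each term vanishes (which one depends on the parity of `n`), and so does the common
denominator factor `1 - abq^{2n+1} = 1 - e^{Dε}`, `D = 2n + 3 + β`. Each term is therefore `±1` in
the limit times `(1 - e^{cε}) / (1 - e^{Dε}) → c / D`, and the two exponents `c` add up to `D`:
`n + 3 + β` and `n` for even `n`, `n + 3` and `n + β` for odd `n`.
-/
open Filter Real Topology

lemma tendsto_exp_mul_sub_one_div (c : ℝ) :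
    Tendsto (fun ε => (exp (c * ε) - 1) / ε) (𝓝[≠] 0) (𝓝 c) := by
  have h : HasDerivAt (fun ε => exp (c * ε)) c 0 := by
    simpa using ((hasDerivAt_id (0 : ℝ)).const_mul c).exp
  simpa [div_eq_inv_mul] using h.tendsto_slope_zero

lemma tendsto_one_sub_exp_div_one_sub_exp (c d : ℝ) (hd : d ≠ 0) :
    Tendsto (fun ε => (1 - exp (c * ε)) / (1 - exp (d * ε))) (𝓝[≠] 0) (𝓝 (c / d)) := by
  refine ((tendsto_exp_mul_sub_one_div c).div (tendsto_exp_mul_sub_one_div d) hd).congr' ?_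
  filter_upwards [self_mem_nhdsWithin] with ε hε
  rw [Pi.div_apply, div_div_div_cancel_right₀ hε, ← neg_sub, ← neg_sub 1, neg_div_neg_eq]

lemma tendsto_mul_one_sub_exp_div_one_sub_exp {f : ℝ → ℝ} (hf : ContinuousAt f 0)
    (c : ℝ) {d : ℝ} (hd : d ≠ 0) :
    Tendsto (fun ε => f ε * ((1 - exp (c * ε)) / (1 - exp (d * ε)))) (𝓝[≠] 0)
      (𝓝 (f 0 * (c / d))) :=
  (hf.tendsto.mono_left nhdsWithin_le_nhds).mul (tendsto_one_sub_exp_div_one_sub_exp c d hd)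

lemma exp_natCast_add_mul (k : ℕ) (β ε : ℝ) : exp ((k + β) * ε) = exp ε ^ k * exp (β * ε) := by
  rw [add_mul, exp_add, exp_nat_mul]

noncomputable def littleQJacobiA (a b q : ℝ) (m : ℕ) : ℝ :=
  q ^ m * (1 - a * q ^ (m + 1)) * (1 - a * b * q ^ (m + 1)) /
    ((1 - a * b * q ^ (2 * m + 1)) * (1 - a * b * q ^ (2 * m + 2)))

noncomputable def littleQJacobiC (a b q : ℝ) (m : ℕ) : ℝ :=
  a * q ^ m * (1 - q ^ m) * (1 - b * q ^ m) /
    ((1 - a * b * q ^ (2 * m + 1)) * (1 - a * b * q ^ (2 * m)))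

noncomputable def littleQJacobiB (a b q : ℝ) (n : ℕ) : ℝ :=
  littleQJacobiA a b q n + littleQJacobiC a b q n

lemma tendsto_littleQJacobiB_of_even {β : ℝ} {n : ℕ} (hn : Even n)
    (hD : ((2 * n + 3 : ℕ) : ℝ) + β ≠ 0) :
    Tendsto (fun ε => littleQJacobiB ((-exp ε) ^ 2) (-exp (β * ε)) (-exp ε) n) (𝓝[≠] 0) (𝓝 1) := by
  have hA := tendsto_mul_one_sub_exp_div_one_sub_exp
    (f := fun ε => exp ε ^ n * (1 + exp ε ^ (n + 3)) / (1 + exp ε ^ (2 * n + 4) * exp (β * ε)))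
    (by fun_prop (disch := positivity)) ((n + 3 : ℕ) + β) hD
  have hC := tendsto_mul_one_sub_exp_div_one_sub_exp
    (f := fun ε => exp ε ^ (n + 2) * (1 + exp ε ^ n * exp (β * ε)) /
      (1 + exp ε ^ (2 * n + 2) * exp (β * ε)))
    (by fun_prop (disch := positivity)) n hD
  convert hA.add hC using 2 with ε
  · have hs : (-1 : ℝ) ^ n = 1 := hn.neg_one_pow
    -- `ring` cannot split the inverse of an expanded product, so both sides become one fraction.
    simp only [littleQJacobiB, littleQJacobiA, littleQJacobiC, exp_natCast_add_mul, exp_nat_mul,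
      neg_pow (exp ε), pow_add, pow_mul', hs, div_mul_div_comm]
    ring
  · push_cast at hD ⊢
    norm_num
    rw [← add_div, eq_comm, div_eq_one_iff_eq hD]
    ring

lemma tendsto_littleQJacobiB_of_odd {β : ℝ} {n : ℕ} (hn : Odd n)
    (hD : ((2 * n + 3 : ℕ) : ℝ) + β ≠ 0) :
    Tendsto (fun ε => littleQJacobiB ((-exp ε) ^ 2) (-exp (β * ε)) (-exp ε) n) (𝓝[≠] 0)
      (𝓝 (-1)) := by
  have hA := tendsto_mul_one_sub_exp_div_one_sub_exp
    (f := fun ε => exp ε ^ n * (1 + exp ε ^ (n + 3) * exp (β * ε)) /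
      (1 + exp ε ^ (2 * n + 4) * exp (β * ε)))
    (by fun_prop (disch := positivity)) (n + 3 : ℕ) hD
  have hC := tendsto_mul_one_sub_exp_div_one_sub_exp
    (f := fun ε => exp ε ^ (n + 2) * (1 + exp ε ^ n) / (1 + exp ε ^ (2 * n + 2) * exp (β * ε)))
    (by fun_prop (disch := positivity)) (n + β) hD
  convert (hA.add hC).neg using 2 with ε
  · have hs : (-1 : ℝ) ^ n = -1 := hn.neg_one_pow
    simp only [littleQJacobiB, littleQJacobiA, littleQJacobiC, exp_natCast_add_mul, exp_nat_mul,
      neg_pow (exp ε), pow_add, pow_mul', hs, div_mul_div_comm]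
    ring
  · push_cast at hD ⊢
    rw [neg_inj]
    norm_num
    rw [← add_div, eq_comm, div_eq_one_iff_eq hD]
    ring

/-- `q → −1` limit of the little q-Jacobi recurrence coefficient `b_n = A_n + C_n`
with `a = q²`, where
`A_m = q^m (1−aq^{m+1})(1−abq^{m+1})/((1−abq^{2m+1})(1−abq^{2m+2}))` and
`C_m = a q^m (1−q^m)(1−bq^m)/((1−abq^{2m+1})(1−abq^{2m}))`:
under `q = −e^ε`, `b = −e^{βε}`, `b_n` tends to `(−1)^n`. -/
theorem bn_limit (β : ℝ) (hβ : -1 < β) (n : ℕ) :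
    Filter.Tendsto
      (fun ε : ℝ =>
        let q : ℝ := -Real.exp ε
        let b : ℝ := -Real.exp (β * ε)
        let a : ℝ := q ^ 2
        q ^ n * (1 - a * q ^ (n + 1)) * (1 - a * b * q ^ (n + 1)) /
            ((1 - a * b * q ^ (2 * n + 1)) * (1 - a * b * q ^ (2 * n + 2))) +
          a * q ^ n * (1 - q ^ n) * (1 - b * q ^ n) /
            ((1 - a * b * q ^ (2 * n + 1)) * (1 - a * b * q ^ (2 * n))))
      (nhdsWithin 0 ({0}ᶜ : Set ℝ))
      (nhds ((-1 : ℝ) ^ n)) := by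
  have hD : ((2 * n + 3 : ℕ) : ℝ) + β ≠ 0 := by
    push_cast
    linarith [(n.cast_nonneg : (0 : ℝ) ≤ n)]
  rcases Nat.even_or_odd n with hn | hn
  · rw [hn.neg_one_pow]
    exact tendsto_littleQJacobiB_of_even hn hD
  · rw [hn.neg_one_pow]
    exact tendsto_littleQJacobiB_of_odd hn hD
end

section
/- Let K be a field of characteristic zero, let b̃_n, ũ_n (n ≥ 0) be sequences in K, and let P̃_n ∈ K[x] (n ≥ 0) satisfy x P̃_n = P̃_{n+1} + b̃_n P̃_n + ũ_n P̃_{n−1} for all n ≥ 1, with even parts E_n(x) = (P̃_n(x) + P̃_n(−x))/2. Let σ_n ∈ K (n ≥ 0) be nonzero with σ_0 = 1 and suppose s_n := σ_n/σ_{n−1} satisfies s_n² = ũ_n for all n ≥ 1. Define F_n = σ_n^{-1} E_n and the coefficients c_{n,0} = ũ_{n+1} + ũ_n + b̃_n², c_{n,1} = (b̃_{n−1} + b̃_n) s_n, c_{n,2} = s_n s_{n−1}. Then for every n ≥ 2, x² F_n = c_{n,0} F_n + c_{n,1} F_{n−1} + c_{n+1,1} F_{n+1} + c_{n,2} F_{n−2}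 + c_{n+2,2} F_{n+2}. -/
open Polynomial

/-- Symmetric five-term recurrence for the normalized even parts `F_n = E_n/σ_n`,
where `E_n(x) = (P̃_n(x)+P̃_n(−x))/2`, the `P̃_n` satisfy
`x P̃_n = P̃_{n+1} + b̃_n P̃_n + ũ_n P̃_{n−1}` (n ≥ 1), `σ_0 = 1`, `σ_n ≠ 0`, and
`s_n = σ_n/σ_{n−1}` satisfies `s_n² = ũ_n` (n ≥ 1): for `n ≥ 2`,
`x² F_n = c_{n,0}F_n + c_{n,1}F_{n−1} + c_{n+1,1}F_{n+1} + c_{n,2}F_{n−2} + c_{n+2,2}F_{n+2}`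
with `c_{n,0} = ũ_{n+1}+ũ_n+b̃_n²`, `c_{n,1} = (b̃_{n−1}+b̃_n)s_n`, `c_{n,2} = s_n s_{n−1}`. -/
theorem normalized_even_part_five_term {K : Type*} [Field K] [CharZero K]
    (bt ut : ℕ → K) (P : ℕ → Polynomial K)
    (hrec : ∀ n : ℕ, 1 ≤ n →
      X * P n = P (n + 1) + C (bt n) * P n + C (ut n) * P (n - 1))
    (E : ℕ → Polynomial K)
    (hE : ∀ n, E n = C (2 : K)⁻¹ * (P n + (P n).comp (-X)))
    (σ : ℕ → K) (hσ0 : σ 0 = 1) (hσne : ∀ n, σ n ≠ 0)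
    (hs : ∀ n : ℕ, 1 ≤ n → (σ n / σ (n - 1)) ^ 2 = ut n)
    (F : ℕ → Polynomial K) (hF : ∀ n, F n = C (σ n)⁻¹ * E n)
    (c : ℕ → ℕ → K)
    (hc0 : ∀ n, c n 0 = ut (n + 1) + ut n + bt n ^ 2)
    (hc1 : ∀ n : ℕ, 1 ≤ n → c n 1 = (bt (n - 1) + bt n) * (σ n / σ (n - 1)))
    (hc2 : ∀ n : ℕ, 2 ≤ n → c n 2 = (σ n / σ (n - 1)) * (σ (n - 1) / σ (n - 2))) :
    ∀ n : ℕ, 2 ≤ n →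
      X ^ 2 * F n =
        C (c n 0) * F n + C (c n 1) * F (n - 1) + C (c (n + 1) 1) * F (n + 1) +
          C (c n 2) * F (n - 2) + C (c (n + 2) 2) * F (n + 2) := by
  intro n hn
  obtain ⟨k, rfl⟩ : ∃ k, n = k + 2 := ⟨n - 2, by omega⟩
  have h1 := hrec (k + 1) (by omega)
  have h2 := hrec (k + 2) (by omega)
  have h3 := hrec (k + 3) (by omega)
  simp only [Nat.add_sub_cancel, show k + 2 - 1 = k + 1 from rfl,
    show k + 3 - 1 = k + 2 from rfl] at h1 h2 h3
  -- the five-term recurrence for P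
  have hP2 : X ^ 2 * P (k + 2) =
      P (k + 4) + (C (bt (k + 3)) + C (bt (k + 2))) * P (k + 3)
        + (C (ut (k + 3)) + C (ut (k + 2)) + C (bt (k + 2)) ^ 2) * P (k + 2)
        + (C (bt (k + 2)) + C (bt (k + 1))) * C (ut (k + 2)) * P (k + 1)
        + C (ut (k + 2)) * C (ut (k + 1)) * P k := by
    have h3' : X * P (k + 3) = P (k + 4) + C (bt (k + 3)) * P (k + 3)
        + C (ut (k + 3)) * P (k + 2) := by
      convert h3 using 3 <;> omega
    linear_combination (X + C (bt (k + 2))) * h2 + h3' + C (ut (k + 2)) * h1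
  -- composed with -X
  have hP2c := congrArg (fun q => q.comp (-X)) hP2
  simp only [mul_comp, add_comp, pow_comp, X_comp, C_comp] at hP2c
  -- the five-term recurrence for E
  have hE2 : X ^ 2 * E (k + 2) =
      E (k + 4) + (C (bt (k + 3)) + C (bt (k + 2))) * E (k + 3)
        + (C (ut (k + 3)) + C (ut (k + 2)) + C (bt (k + 2)) ^ 2) * E (k + 2)
        + (C (bt (k + 2)) + C (bt (k + 1))) * C (ut (k + 2)) * E (k + 1)
        + C (ut (k + 2)) * C (ut (k + 1)) * E k := by
    simp only [hE]
    linear_combination C (2 : K)⁻¹ * hP2 + C (2 : K)⁻¹ * hP2c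
  -- scalar coefficient identities
  have hu2 := hs (k + 2) (by omega)
  have hu1 := hs (k + 1) (by omega)
  simp only [Nat.add_sub_cancel] at hu2 hu1
  have ne0 := hσne k
  have ne1 := hσne (k + 1)
  have ne2 := hσne (k + 2)
  have ne3 := hσne (k + 3)
  have ne4 := hσne (k + 4)
  have e4 : c (k + 4) 2 * (σ (k + 4))⁻¹ = (σ (k + 2))⁻¹ := by
    rw [hc2 (k + 4) (by omega)]
    have : (k + 4 : ℕ) - 1 = k + 3 := by omega
    rw [this]
    have : (k + 4 : ℕ) - 2 = k + 2 := by omega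
    rw [this]
    field_simp
  have e3 : c (k + 3) 1 * (σ (k + 3))⁻¹ = (bt (k + 3) + bt (k + 2)) * (σ (k + 2))⁻¹ := by
    rw [hc1 (k + 3) (by omega)]
    have : (k + 3 : ℕ) - 1 = k + 2 := by omega
    rw [this]
    field_simp
    ring
  have e1 : c (k + 2) 1 * (σ (k + 1))⁻¹
      = (bt (k + 2) + bt (k + 1)) * ut (k + 2) * (σ (k + 2))⁻¹ := by
    rw [hc1 (k + 2) (by omega), ← hu2]
    have : (k + 2 : ℕ) - 1 = k + 1 := by omega
    rw [this]
    field_simp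
    ring
  have e0 : c (k + 2) 2 * (σ k)⁻¹ = ut (k + 2) * ut (k + 1) * (σ (k + 2))⁻¹ := by
    rw [hc2 (k + 2) (by omega), ← hu2, ← hu1]
    have h21 : (k + 2 : ℕ) - 1 = k + 1 := by omega
    have h22 : (k + 2 : ℕ) - 2 = k := by omega
    rw [h21, h22]
    field_simp
  -- assemble
  have hgF : ∀ m, F m = C (σ m)⁻¹ * E m := hF
  have hn1 : (k + 2 : ℕ) - 1 = k + 1 := by omega
  have hn2 : (k + 2 : ℕ) - 2 = k := by omega
  rw [hn1, hn2, hgF (k + 2), hgF (k + 1), hgF k, hgF (k + 3), hgF (k + 4),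
    hc0 (k + 2)]
  have e4' : C (c (k + 4) 2) * C (σ (k + 4))⁻¹ = C (σ (k + 2))⁻¹ := by
    rw [← C_mul, e4]
  have e3' : C (c (k + 3) 1) * C (σ (k + 3))⁻¹
      = (C (bt (k + 3)) + C (bt (k + 2))) * C (σ (k + 2))⁻¹ := by
    rw [← C_mul, e3, C_mul, C_add]
  have e1' : C (c (k + 2) 1) * C (σ (k + 1))⁻¹
      = (C (bt (k + 2)) + C (bt (k + 1))) * C (ut (k + 2)) * C (σ (k + 2))⁻¹ := by
    rw [← C_mul, e1, C_mul, C_mul, C_add]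
  have e0' : C (c (k + 2) 2) * C (σ k)⁻¹
      = C (ut (k + 2)) * C (ut (k + 1)) * C (σ (k + 2))⁻¹ := by
    rw [← C_mul, e0, C_mul, C_mul]
  have hc0' : C (ut (k + 2 + 1) + ut (k + 2) + bt (k + 2) ^ 2)
      = C (ut (k + 3)) + C (ut (k + 2)) + C (bt (k + 2)) ^ 2 := by
    norm_num [C_add, C_pow]
  rw [hc0']
  simp only [show k + 2 + 2 = k + 4 from rfl, show k + 2 + 1 = k + 3 from rfl]
  linear_combination C (σ (k + 2))⁻¹ * hE2 - E (k + 4) * e4'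
    - E (k + 3) * e3' - E (k + 1) * e1' - E k * e0'
end
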